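/- arXiv:math-ph/0410050 — 13 statements merged into one kernel-verified Lean document; each statement's English description precedes it below -/
import Mathlib

section
/- Let l be a natural number and let y be the function defined on I by y(s) = (1/ρ(s)) · (d/ds)^l [σ(s)^l ρ(s)] (the Rodrigues formula). Then y satisfies the hypergeometric type equation σ(s) y''(s) + τ(s) y'(s) + λ_l y(s) = 0 for all s in I. -/
lemma aux_smooth_iter (f : ℝ → ℝ) (I : Set ℝ) (hI : IsOpen I)
    (hf : ContDiffOn ℝ (⊤ : ℕ∞) f I) (k : ℕ) :
    ContDiffOn ℝ (⊤ : ℕ∞) (iteratedDeriv k f) I := by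
  induction k with
  | zero => simpa using hf
  | succ n ih =>
    rw [iteratedDeriv_succ]
    exact ih.deriv_of_isOpen hI (by simp)

lemma aux_diffAt (f : ℝ → ℝ) (I : Set ℝ) (hI : IsOpen I)
    (hf : ContDiffOn ℝ (⊤ : ℕ∞) f I) (k : ℕ) {s : ℝ} (hs : s ∈ I) :
    DifferentiableAt ℝ (iteratedDeriv k f) s :=
  ((aux_smooth_iter f I hI hf k).differentiableOn (by simp)).differentiableAt (hI.mem_nhds hs)



/-- If `y` is given by the Rodrigues formula
`y(s) = (1/ρ(s)) (d/ds)^l [σ(s)^l ρ(s)]`, where `σ, τ` are polynomials of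
degree ≤ 2 resp. ≤ 1 and `ρ` satisfies the Pearson equation `(σρ)' = τρ`
on the nonempty open interval `I`, then `y` satisfies the hypergeometric
type equation `σ y'' + τ y' + λ_l y = 0` on `I`, where
`λ_l = -l(l-1)σ''/2 - l τ'`. -/
theorem rodrigues_satisfies_hypergeometric_equation
    (a b c d e : ℝ) (σ τ : ℝ → ℝ)
    (hσ : ∀ s, σ s = a * s ^ 2 + b * s + c)
    (hτ : ∀ s, τ s = d * s + e)
    (I : Set ℝ) (hI : IsOpen I) (hIne : I.Nonempty) (hIconn : I.OrdConnected)
    (ρ : ℝ → ℝ) (hρ : ContDiffOn ℝ (⊤ : ℕ∞) ρ I) (hρpos : ∀ s ∈ I, 0 < ρ s)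
    (hPearson : ∀ s ∈ I, deriv (fun t => σ t * ρ t) s = τ s * ρ s)
    (l : ℕ) (y : ℝ → ℝ)
    (hy : ∀ s, y s = (1 / ρ s) * iteratedDeriv l (fun t => σ t ^ l * ρ t) s) :
    ∀ s ∈ I,
      σ s * deriv (deriv y) s + τ s * deriv y s
        + (-(l : ℝ) * ((l : ℝ) - 1) * a - (l : ℝ) * d) * y s = 0 := by
  -- basic facts about σ, τ
  have hσD : ∀ s, HasDerivAt σ (2 * a * s + b) s := by
    intro s
    rw [show σ = fun t => a * t ^ 2 + b * t + c from funext hσ]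
    have h1 : HasDerivAt (fun t : ℝ => a * t ^ 2 + b * t + c)
        (a * (2 * s) + b) s := by
      exact (((hasDerivAt_pow 2 s).const_mul a).add
        ((hasDerivAt_id s).const_mul b)).add_const c |>.congr_deriv (by ring)
    simpa using h1.congr_deriv (by ring)
  have hτD : ∀ s, HasDerivAt τ d s := by
    intro s
    rw [show τ = fun t => d * t + e from funext hτ]
    simpa using ((hasDerivAt_id s).const_mul d).add_const e
  have hσC : ContDiff ℝ (⊤ : ℕ∞) σ := by
    rw [show σ = fun t => a * t ^ 2 + b * t + c from funext hσ]
    fun_prop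
  -- the function v and its derivatives
  set v : ℝ → ℝ := fun t => σ t ^ l * ρ t with hv_def
  have hvC : ContDiffOn ℝ (⊤ : ℕ∞) v I := ((hσC.pow l).contDiffOn).mul hρ
  have hvD : ∀ (k : ℕ), ∀ s ∈ I, HasDerivAt (iteratedDeriv k v)
      (iteratedDeriv (k + 1) v s) s := by
    intro k s hs
    have h := (aux_diffAt v I hI hvC k hs).hasDerivAt
    rwa [← iteratedDeriv_succ] at h
  have hρD : ∀ s ∈ I, HasDerivAt ρ (deriv ρ s) s := by
    intro s hs
    exact ((hρ.differentiableOn (by simp)).differentiableAt (hI.mem_nhds hs)).hasDerivAt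
  have hρD' : ∀ s ∈ I, DifferentiableAt ℝ (deriv ρ) s := by
    intro s hs
    have := aux_diffAt ρ I hI hρ 1 hs
    rwa [iteratedDeriv_one] at this
  -- Pearson rewritten
  have hP : ∀ s ∈ I, σ s * deriv ρ s = (τ s - (2 * a * s + b)) * ρ s := by
    intro s hs
    have h1 := hPearson s hs
    have h2 : deriv (fun t => σ t * ρ t) s
        = (2 * a * s + b) * ρ s + σ s * deriv ρ s := ((hσD s).mul (hρD s hs)).deriv
    rw [h2] at h1
    linarith
  -- abbreviations
  set τl : ℝ → ℝ := fun t => τ t + ((l : ℝ) - 1) * (2 * a * t + b) with hτl_def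
  set tlp : ℝ := d + ((l : ℝ) - 1) * (2 * a) with htlp_def
  have hτlD : ∀ s, HasDerivAt τl tlp s := by
    intro s
    have h1 : HasDerivAt (fun t : ℝ => ((l : ℝ) - 1) * (2 * a * t + b))
        (((l : ℝ) - 1) * (2 * a)) s := by
      simpa using ((((hasDerivAt_id s).const_mul (2 * a)).add_const b).const_mul
        ((l : ℝ) - 1)).congr_deriv (by ring)
    exact (hτD s).add h1
  -- base identity: σ v' = τl v on I
  have base : ∀ s ∈ I, σ s * iteratedDeriv 1 v s = τl s * v s := by
    intro s hs
    have hD : HasDerivAt v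
        ((l : ℝ) * σ s ^ (l - 1) * (2 * a * s + b) * ρ s + σ s ^ l * deriv ρ s) s := by
      exact (((hσD s).pow l).mul (hρD s hs)).congr_deriv (by simp only [Pi.pow_apply])
    rw [iteratedDeriv_one, hD.deriv]
    have hp := hP s hs
    simp only [hτl_def, hv_def]
    rcases l with _ | k
    · push_cast
      simp only [pow_zero]
      linear_combination hp
    · simp only [Nat.add_sub_cancel]
      push_cast
      linear_combination (σ s ^ (k + 1)) * hp
  -- the differentiated identities
  have key : ∀ m : ℕ, ∀ s ∈ I,
      σ s * iteratedDeriv (m + 2) v s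
        = (τl s - ((m : ℝ) + 1) * (2 * a * s + b)) * iteratedDeriv (m + 1) v s
          + (((m : ℝ) + 1) * tlp - ((m : ℝ) + 1) * (m : ℝ) * a) * iteratedDeriv m v s := by
    intro m
    induction m with
    | zero =>
      intro s hs
      have hEq : deriv (fun t => σ t * iteratedDeriv 1 v t) s
          = deriv (fun t => τl t * v t) s := by
        apply Filter.EventuallyEq.deriv_eq
        filter_upwards [hI.mem_nhds hs] with t ht using base t ht
      have hL : deriv (fun t => σ t * iteratedDeriv 1 v t) s
          = (2 * a * s + b) * iteratedDeriv 1 v s + σ s * iteratedDeriv 2 v s :=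
        ((hσD s).mul (hvD 1 s hs)).deriv
      have h0 := hvD 0 s hs
      rw [iteratedDeriv_zero] at h0
      have hR : deriv (fun t => τl t * v t) s
          = tlp * v s + τl s * iteratedDeriv 1 v s := ((hτlD s).mul h0).deriv
      rw [hL, hR] at hEq
      rw [show (0:ℕ) + 2 = 2 from rfl, show (0:ℕ) + 1 = 1 from rfl, iteratedDeriv_zero]
      push_cast
      linear_combination hEq
    | succ m ih =>
      intro s hs
      have hEq : deriv (fun t => σ t * iteratedDeriv (m + 2) v t) s
          = deriv (fun t =>
              (τl t - ((m : ℝ) + 1) * (2 * a * t + b)) * iteratedDeriv (m + 1) v t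
              + (((m : ℝ) + 1) * tlp - ((m : ℝ) + 1) * (m : ℝ) * a)
                  * iteratedDeriv m v t) s := by
        apply Filter.EventuallyEq.deriv_eq
        filter_upwards [hI.mem_nhds hs] with t ht using ih t ht
      have hL : deriv (fun t => σ t * iteratedDeriv (m + 2) v t) s
          = (2 * a * s + b) * iteratedDeriv (m + 2) v s
            + σ s * iteratedDeriv (m + 2 + 1) v s :=
        ((hσD s).mul (hvD (m + 2) s hs)).deriv
      have hlin : HasDerivAt (fun t => τl t - ((m : ℝ) + 1) * (2 * a * t + b))
          (tlp - ((m : ℝ) + 1) * (2 * a)) s := by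
        refine (hτlD s).sub ?_
        simpa using ((((hasDerivAt_id s).const_mul (2 * a)).add_const b).const_mul
          ((m : ℝ) + 1)).congr_deriv (by ring)
      have hR : deriv (fun t =>
              (τl t - ((m : ℝ) + 1) * (2 * a * t + b)) * iteratedDeriv (m + 1) v t
              + (((m : ℝ) + 1) * tlp - ((m : ℝ) + 1) * (m : ℝ) * a)
                  * iteratedDeriv m v t) s
          = ((tlp - ((m : ℝ) + 1) * (2 * a)) * iteratedDeriv (m + 1) v s
              + (τl s - ((m : ℝ) + 1) * (2 * a * s + b)) * iteratedDeriv (m + 1 + 1) v s)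
            + (((m : ℝ) + 1) * tlp - ((m : ℝ) + 1) * (m : ℝ) * a)
                * iteratedDeriv (m + 1) v s :=
        ((hlin.mul (hvD (m + 1) s hs)).add
          ((hvD m s hs).const_mul
            (((m : ℝ) + 1) * tlp - ((m : ℝ) + 1) * (m : ℝ) * a))).deriv
      rw [hL, hR] at hEq
      rw [show m + 1 + 2 = m + 2 + 1 from rfl, show m + 1 + 1 = m + 2 from rfl]
      rw [show m + 1 + 1 = m + 2 from rfl] at hEq
      push_cast
      linear_combination hEq
  -- final assembly
  intro s hs
  have hρne : ρ s ≠ 0 := (hρpos s hs).ne'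
  have hyfun : y = fun t => iteratedDeriv l v t / ρ t := by
    funext t; rw [hy t]; ring
  have hy' : ∀ t ∈ I, deriv y t
      = (iteratedDeriv (l + 1) v t * ρ t - iteratedDeriv l v t * deriv ρ t) / ρ t ^ 2 := by
    intro t ht
    rw [hyfun]
    exact ((hvD l t ht).div (hρD t ht) (hρpos t ht).ne').deriv
  have hA : ∀ t ∈ I, σ t * ρ t * deriv y t
      = σ t * iteratedDeriv (l + 1) v t
        + ((2 * a * t + b) - τ t) * iteratedDeriv l v t := by
    intro t ht
    have hρt : ρ t ≠ 0 := (hρpos t ht).ne'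
    rw [hy' t ht]
    have hp := hP t ht
    field_simp
    linear_combination (-(iteratedDeriv l v t)) * hp
  have hwD : DifferentiableAt ℝ (iteratedDeriv l v) s := aux_diffAt v I hI hvC l hs
  have hw1D : DifferentiableAt ℝ (iteratedDeriv (l + 1) v) s :=
    aux_diffAt v I hI hvC (l + 1) hs
  have hEyd : DifferentiableAt ℝ (deriv y) s := by
    have hE : DifferentiableAt ℝ (fun t =>
        (iteratedDeriv (l + 1) v t * ρ t - iteratedDeriv l v t * deriv ρ t) / ρ t ^ 2) s := by
      apply DifferentiableAt.div
      · exact (hw1D.mul (hρD s hs).differentiableAt).sub (hwD.mul (hρD' s hs))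
      · exact ((hρD s hs).differentiableAt).pow 2
      · positivity
    apply hE.congr_of_eventuallyEq
    filter_upwards [hI.mem_nhds hs] with t ht using hy' t ht
  have hval : (2 * a * s + b) * ρ s + σ s * deriv ρ s = τ s * ρ s := by
    have h := ((hσD s).mul (hρD s hs)).deriv
    rw [show (σ * ρ) = (fun t => σ t * ρ t) from rfl, hPearson s hs] at h
    linarith
  have hσρD : HasDerivAt (fun t => σ t * ρ t) (τ s * ρ s) s :=
    ((hσD s).mul (hρD s hs)).congr_deriv hval
  have hLd : HasDerivAt (fun t => σ t * ρ t * deriv y t)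
      (τ s * ρ s * deriv y s
        + σ s * ρ s * deriv (deriv y) s) s := hσρD.mul hEyd.hasDerivAt
  have hlin2 : HasDerivAt (fun t => (2 * a * t + b) - τ t) (2 * a - d) s := by
    refine HasDerivAt.sub ?_ (hτD s)
    simpa using (((hasDerivAt_id s).const_mul (2 * a)).add_const b).congr_deriv (by ring)
  have hRd : HasDerivAt (fun t => σ t * iteratedDeriv (l + 1) v t
      + ((2 * a * t + b) - τ t) * iteratedDeriv l v t)
      (((2 * a * s + b) * iteratedDeriv (l + 1) v s + σ s * iteratedDeriv (l + 1 + 1) v s)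
        + ((2 * a - d) * iteratedDeriv l v s
            + ((2 * a * s + b) - τ s) * iteratedDeriv (l + 1) v s)) s :=
    ((hσD s).mul (hvD (l + 1) s hs)).add (hlin2.mul (hvD l s hs))
  have hEq : τ s * ρ s * deriv y s + σ s * ρ s * deriv (deriv y) s
      = ((2 * a * s + b) * iteratedDeriv (l + 1) v s + σ s * iteratedDeriv (l + 1 + 1) v s)
        + ((2 * a - d) * iteratedDeriv l v s
            + ((2 * a * s + b) - τ s) * iteratedDeriv (l + 1) v s) := by
    have h : deriv (fun t => σ t * ρ t * deriv y t) s
        = deriv (fun t => σ t * iteratedDeriv (l + 1) v t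
            + ((2 * a * t + b) - τ t) * iteratedDeriv l v t) s := by
      apply Filter.EventuallyEq.deriv_eq
      filter_upwards [hI.mem_nhds hs] with t ht using hA t ht
    rw [hLd.deriv, hRd.deriv] at h
    exact h
  have hkey := key l s hs
  rw [show l + 1 + 1 = l + 2 from rfl] at hEq
  have hw : iteratedDeriv l v s = ρ s * y s := by
    rw [hy s]; field_simp
  have hz : ρ s * (σ s * deriv (deriv y) s + τ s * deriv y s
      + (-(l : ℝ) * ((l : ℝ) - 1) * a - (l : ℝ) * d) * y s) = 0 := by
    simp only [hτl_def, htlp_def] at hkey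
    linear_combination hEq + hkey + ((l : ℝ) * ((l : ℝ) - 1) * a + (l : ℝ) * d) * hw
  rcases mul_eq_zero.mp hz with h | h
  · exact absurd h hρne
  · exact h
end

section
/- Let l, m be natural numbers and let y be infinitely differentiable on I satisfying σ(s) y''(s) + τ(s) y'(s) + λ_l y(s) = 0 on I. Then the m-th derivative u = y^{(m)} satisfies σ(s) u''(s) + [τ(s) + m σ'(s)] u'(s) + (λ_l − λ_m) u(s) = 0 for all s in I. -/
/-- If `y` is infinitely differentiable on the nonempty open
interval `I` and satisfies `σ y'' + τ y' + λ_l y = 0` on `I`, where `σ, τ`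
are polynomials of degree ≤ 2 resp. ≤ 1 and `λ_j = -j(j-1)σ''/2 - j τ'`,
then `u = y^{(m)}` satisfies `σ u'' + (τ + m σ') u' + (λ_l - λ_m) u = 0`
on `I`. -/
theorem mth_derivative_satisfies_hypergeometric_equation
    (a b c d e : ℝ) (σ τ : ℝ → ℝ)
    (hσ : ∀ s, σ s = a * s ^ 2 + b * s + c)
    (hτ : ∀ s, τ s = d * s + e)
    (lam : ℕ → ℝ)
    (hlam : ∀ j : ℕ, lam j = -(j : ℝ) * ((j : ℝ) - 1) * a - (j : ℝ) * d)
    (I : Set ℝ) (hI : IsOpen I) (hIne : I.Nonempty) (hIconn : I.OrdConnected)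
    (l m : ℕ) (y : ℝ → ℝ) (hy : ContDiffOn ℝ (⊤ : ℕ∞) y I)
    (heq : ∀ s ∈ I, σ s * deriv (deriv y) s + τ s * deriv y s + lam l * y s = 0) :
    ∀ s ∈ I,
      σ s * deriv (deriv (iteratedDeriv m y)) s
        + (τ s + (m : ℝ) * (2 * a * s + b)) * deriv (iteratedDeriv m y) s
        + (lam l - lam m) * iteratedDeriv m y s = 0 := by
  obtain rfl : σ = fun s => a * s ^ 2 + b * s + c := funext hσ
  obtain rfl : τ = fun s => d * s + e := funext hτ
  obtain rfl : lam = fun j : ℕ => -(j : ℝ) * ((j : ℝ) - 1) * a - (j : ℝ) * d := funext hlam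
  simp only at heq ⊢
  -- smoothness of all iterated derivatives
  have hsm : ∀ n : ℕ, ContDiffOn ℝ (⊤ : ℕ∞) (iteratedDeriv n y) I := by
    intro n
    induction n with
    | zero => simpa [iteratedDeriv_zero] using hy
    | succ k ih =>
      rw [iteratedDeriv_succ]
      exact ih.deriv_of_isOpen hI (by simp)
  have hdiff : ∀ (n : ℕ), ∀ s ∈ I, DifferentiableAt ℝ (iteratedDeriv n y) s := fun n s hs =>
    ((hsm n).differentiableOn (by simp)).differentiableAt (hI.mem_nhds hs)
  have hd : ∀ (n : ℕ), ∀ s ∈ I, HasDerivAt (iteratedDeriv n y) (iteratedDeriv (n + 1) y s) s := by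
    intro n s hs
    rw [iteratedDeriv_succ]
    exact (hdiff n s hs).hasDerivAt
  -- the key induction, stated via iteratedDeriv
  have key : ∀ k : ℕ, ∀ s ∈ I,
      (a * s ^ 2 + b * s + c) * iteratedDeriv (k + 2) y s
        + ((d * s + e) + (k : ℝ) * (2 * a * s + b)) * iteratedDeriv (k + 1) y s
        + ((-(l : ℝ) * ((l : ℝ) - 1) * a - (l : ℝ) * d)
            - (-(k : ℝ) * ((k : ℝ) - 1) * a - (k : ℝ) * d)) * iteratedDeriv k y s = 0 := by
    intro k
    induction k with
    | zero =>
      intro s hs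
      have := heq s hs
      simp only [iteratedDeriv_succ, iteratedDeriv_zero]
      push_cast
      linarith [heq s hs]
    | succ k ih =>
      intro s hs
      set C : ℝ := (-(l : ℝ) * ((l : ℝ) - 1) * a - (l : ℝ) * d)
            - (-(k : ℝ) * ((k : ℝ) - 1) * a - (k : ℝ) * d) with hC
      set F : ℝ → ℝ := fun t =>
        (a * t ^ 2 + b * t + c) * iteratedDeriv (k + 2) y t
          + ((d * t + e) + (k : ℝ) * (2 * a * t + b)) * iteratedDeriv (k + 1) y t
          + C * iteratedDeriv k y t with hF
      have hP : HasDerivAt (fun t : ℝ => a * t ^ 2 + b * t + c) (2 * a * s + b) s := by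
        have h1 := ((hasDerivAt_pow 2 s).const_mul a).add
            (((hasDerivAt_id s).const_mul b).add_const c)
        simp only [id, Pi.add_def] at h1
        have h2 : (fun x : ℝ => a * x ^ 2 + (b * x + c))
            = fun t : ℝ => a * t ^ 2 + b * t + c := by funext t; ring
        rw [h2] at h1
        refine h1.congr_deriv ?_
        push_cast
        ring
      have hQ : HasDerivAt (fun t : ℝ => (d * t + e) + (k : ℝ) * (2 * a * t + b))
          (d + (k : ℝ) * (2 * a)) s := by
        have h1 := (((hasDerivAt_id s).const_mul d).add_const e).add
            ((((hasDerivAt_id s).const_mul (2 * a)).add_const b).const_mul (k : ℝ))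
        simp only [id, Pi.add_def] at h1
        refine h1.congr_deriv ?_
        ring
      have hDF : HasDerivAt F
          ((2 * a * s + b) * iteratedDeriv (k + 2) y s
            + (a * s ^ 2 + b * s + c) * iteratedDeriv (k + 3) y s
            + ((d + (k : ℝ) * (2 * a)) * iteratedDeriv (k + 1) y s
              + ((d * s + e) + (k : ℝ) * (2 * a * s + b)) * iteratedDeriv (k + 2) y s)
            + C * iteratedDeriv (k + 1) y s) s := by
        exact ((hP.mul (hd (k + 2) s hs)).add (hQ.mul (hd (k + 1) s hs))).add
          ((hd k s hs).const_mul C)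
      have hF0 : F =ᶠ[nhds s] fun _ => 0 :=
        Filter.eventuallyEq_of_mem (hI.mem_nhds hs) ih
      have hzero : (2 * a * s + b) * iteratedDeriv (k + 2) y s
            + (a * s ^ 2 + b * s + c) * iteratedDeriv (k + 3) y s
            + ((d + (k : ℝ) * (2 * a)) * iteratedDeriv (k + 1) y s
              + ((d * s + e) + (k : ℝ) * (2 * a * s + b)) * iteratedDeriv (k + 2) y s)
            + C * iteratedDeriv (k + 1) y s = 0 := by
        have := hF0.deriv_eq
        rw [hDF.deriv] at this
        simpa using this
      have h32 : k + 1 + 2 = k + 3 := by ring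
      have h21 : k + 1 + 1 = k + 2 := by ring
      rw [h32, h21, hC] at *
      push_cast
      linarith [hzero]
  intro s hs
  have := key m s hs
  have e2 : deriv (deriv (iteratedDeriv m y)) s = iteratedDeriv (m + 2) y s := by
    rw [show m + 2 = m + 1 + 1 from rfl, iteratedDeriv_succ, iteratedDeriv_succ]
  have e1 : deriv (iteratedDeriv m y) s = iteratedDeriv (m + 1) y s := by
    rw [iteratedDeriv_succ]
  rw [e2, e1]
  linarith [this]
end

section
/- Let l, m be natural numbers and let y be infinitely differentiable on I satisfying σ(s) y''(s) + τ(s) y'(s) + λ_l y(s) = 0 on I. Then the associated special function Ψ_{l,m}(s) = κ(s)^m y^{(m)}(s) satisfies (H_m Ψ_{l,m})(s) = λ_l Ψ_{l,m}(s) for all s in I. -/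
private lemma hm_algebra (S T P A dd L M G u u1 u2 : ℝ) (hS : S ≠ 0)
    (hode : S * u2 + (T + M * P) * u1 + (L + M * dd + M * (M - 1) * A) * u = 0) :
    -S * ((M * (2 * A) * (2 * S) - M * P * (2 * P)) / (2 * S) ^ 2 * (G * u)
        + M * P / (2 * S) * (M * P / (2 * S) * (G * u) + G * u1)
        + (M * P / (2 * S) * G * u1 + G * u2))
      - T * (M * P / (2 * S) * (G * u) + G * u1)
      + (M * (M - 2) * P ^ 2 / (4 * S) + M * T * P / (2 * S) - M * (M - 2) * (2 * A) / 2 - M * dd)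
          * (G * u)
      = L * (G * u) := by
  field_simp
  linear_combination (-(16 * S * G)) * hode

/-- If `y` is infinitely differentiable on the nonempty open
interval `I` (on which `σ > 0`) and satisfies `σ y'' + τ y' + λ_l y = 0`,
then the associated special function `Ψ_{l,m}(s) = κ(s)^m y^{(m)}(s)`, with
`κ = √σ`, satisfies `H_m Ψ_{l,m} = λ_l Ψ_{l,m}` on `I`, where
`(H_m f)(s) = -σ f'' - τ f' + [m(m-2)σ'²/(4σ) + mτσ'/(2σ) - m(m-2)σ''/2 - mτ'] f`. -/
theorem associated_special_function_eigenfunction_of_Hm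
    (a b c d e : ℝ) (σ τ : ℝ → ℝ)
    (hσ : ∀ s, σ s = a * s ^ 2 + b * s + c)
    (hτ : ∀ s, τ s = d * s + e)
    (lam : ℕ → ℝ)
    (hlam : ∀ j : ℕ, lam j = -(j : ℝ) * ((j : ℝ) - 1) * a - (j : ℝ) * d)
    (I : Set ℝ) (hI : IsOpen I) (hIne : I.Nonempty) (hIconn : I.OrdConnected)
    (hσpos : ∀ s ∈ I, 0 < σ s)
    (κ : ℝ → ℝ) (hκ : ∀ s, κ s = Real.sqrt (σ s))
    (l m : ℕ) (y : ℝ → ℝ) (hy : ContDiffOn ℝ (⊤ : ℕ∞) y I)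
    (heq : ∀ s ∈ I, σ s * deriv (deriv y) s + τ s * deriv y s + lam l * y s = 0)
    (Ψ : ℝ → ℝ) (hΨ : ∀ s, Ψ s = κ s ^ m * iteratedDeriv m y s) :
    ∀ s ∈ I,
      -σ s * deriv (deriv Ψ) s - τ s * deriv Ψ s
        + ((m : ℝ) * ((m : ℝ) - 2) * (2 * a * s + b) ^ 2 / (4 * σ s)
            + (m : ℝ) * τ s * (2 * a * s + b) / (2 * σ s)
            - (m : ℝ) * ((m : ℝ) - 2) * (2 * a) / 2
            - (m : ℝ) * d) * Ψ s
      = lam l * Ψ s := by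
  -- derivatives of σ and τ
  have hσD : ∀ s : ℝ, HasDerivAt σ (2 * a * s + b) s := by
    intro s
    have h : HasDerivAt (fun t : ℝ => a * t ^ 2 + b * t + c) (2 * a * s + b) s := by
      have h1 : HasDerivAt (fun t : ℝ => t ^ 2) (2 * s) s := by simpa using hasDerivAt_pow 2 s
      have h2 : HasDerivAt (fun t : ℝ => t) 1 s := hasDerivAt_id s
      have := ((h1.const_mul a).add (h2.const_mul b)).add_const c
      exact this.congr_deriv (by ring)
    exact (funext hσ : σ = _) ▸ h
  have hτD : ∀ s : ℝ, HasDerivAt τ d s := by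
    intro s
    have h : HasDerivAt (fun t : ℝ => d * t + e) d s := by
      have h2 : HasDerivAt (fun t : ℝ => t) 1 s := hasDerivAt_id s
      have := (h2.const_mul d).add_const e
      exact this.congr_deriv (by ring)
    exact (funext hτ : τ = _) ▸ h
  -- smoothness of iterated derivatives
  have hcd : ∀ k : ℕ, ContDiffOn ℝ (⊤ : ℕ∞) (iteratedDeriv k y) I := by
    intro k
    induction k with
    | zero => simpa [iteratedDeriv_zero] using hy
    | succ n ih =>
      rw [iteratedDeriv_succ]
      exact ih.deriv_of_isOpen hI (by simp)
  have hdA : ∀ (k : ℕ), ∀ s ∈ I, HasDerivAt (iteratedDeriv k y) (iteratedDeriv (k + 1) y s) s := by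
    intro k s hs
    have h1 : DifferentiableAt ℝ (iteratedDeriv k y) s :=
      ((hcd k).differentiableOn (by simp)).differentiableAt (hI.mem_nhds hs)
    rw [iteratedDeriv_succ]
    exact h1.hasDerivAt
  -- the m-times differentiated ODE
  have hODE : ∀ n : ℕ, ∀ s ∈ I,
      σ s * iteratedDeriv (n + 2) y s
        + (τ s + (n : ℝ) * (2 * a * s + b)) * iteratedDeriv (n + 1) y s
        + (lam l + (n : ℝ) * d + (n : ℝ) * ((n : ℝ) - 1) * a) * iteratedDeriv n y s = 0 := by
    intro n
    induction n with
    | zero =>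
      intro s hs
      have h0 := heq s hs
      have h2 : iteratedDeriv 2 y = deriv (deriv y) := by
        rw [iteratedDeriv_succ, iteratedDeriv_one]
      simp only [zero_add, iteratedDeriv_zero, iteratedDeriv_one, h2, Nat.cast_zero]
      linear_combination h0
    | succ n ih =>
      intro s hs
      have hσs := hσD s
      have hlin : HasDerivAt (fun t : ℝ => τ t + (n : ℝ) * (2 * a * t + b))
          (d + (n : ℝ) * (2 * a)) s := by
        have h2 : HasDerivAt (fun t : ℝ => 2 * a * t + b) (2 * a) s := by
          have := ((hasDerivAt_id s).const_mul (2 * a)).add_const b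
          exact this.congr_deriv (by ring)
        exact (hτD s).add (h2.const_mul (n : ℝ))
      have hF : HasDerivAt (fun t => σ t * iteratedDeriv (n + 2) y t
            + (τ t + (n : ℝ) * (2 * a * t + b)) * iteratedDeriv (n + 1) y t
            + (lam l + (n : ℝ) * d + (n : ℝ) * ((n : ℝ) - 1) * a) * iteratedDeriv n y t)
          ((2 * a * s + b) * iteratedDeriv (n + 2) y s + σ s * iteratedDeriv (n + 3) y s
            + ((d + (n : ℝ) * (2 * a)) * iteratedDeriv (n + 1) y s
              + (τ s + (n : ℝ) * (2 * a * s + b)) * iteratedDeriv (n + 2) y s)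
            + (lam l + (n : ℝ) * d + (n : ℝ) * ((n : ℝ) - 1) * a) * iteratedDeriv (n + 1) y s)
          s :=
        ((hσs.mul (hdA (n + 2) s hs)).add (hlin.mul (hdA (n + 1) s hs))).add
          ((hdA n s hs).const_mul _)
      have hzero : deriv (fun t => σ t * iteratedDeriv (n + 2) y t
            + (τ t + (n : ℝ) * (2 * a * t + b)) * iteratedDeriv (n + 1) y t
            + (lam l + (n : ℝ) * d + (n : ℝ) * ((n : ℝ) - 1) * a) * iteratedDeriv n y t) s = 0 := by
        have hev : (fun t => σ t * iteratedDeriv (n + 2) y t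
            + (τ t + (n : ℝ) * (2 * a * t + b)) * iteratedDeriv (n + 1) y t
            + (lam l + (n : ℝ) * d + (n : ℝ) * ((n : ℝ) - 1) * a) * iteratedDeriv n y t)
            =ᶠ[nhds s] (fun _ => (0 : ℝ)) :=
          Filter.eventuallyEq_of_mem (hI.mem_nhds hs) (fun t ht => ih t ht)
        rw [hev.deriv_eq]
        simp
      have hD := hF.deriv
      rw [hzero] at hD
      push_cast
      linear_combination -hD
  -- derivative of κ ^ m
  have hκfun : κ = fun t => Real.sqrt (σ t) := funext hκ
  have hκpow : ∀ s ∈ I, HasDerivAt (fun t => κ t ^ m)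
      ((m : ℝ) * (2 * a * s + b) / (2 * σ s) * κ s ^ m) s := by
    intro s hs
    have hσs := hσpos s hs
    have hKne : κ s ≠ 0 := by
      rw [hκ]; exact ne_of_gt (Real.sqrt_pos.2 hσs)
    have hK2 : κ s ^ 2 = σ s := by
      rw [hκ]; exact Real.sq_sqrt hσs.le
    cases m with
    | zero => simpa using hasDerivAt_const s (1 : ℝ)
    | succ k =>
      have hκs : HasDerivAt κ ((2 * a * s + b) / (2 * κ s)) s := by
        rw [hκfun]
        simpa [← hκ s, hκfun] using (hσD s).sqrt (ne_of_gt hσs)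
      have := hκs.pow (k + 1)
      refine this.congr_deriv ?_
      simp only [Nat.add_sub_cancel]
      rw [← hK2]
      push_cast
      field_simp
      ring
  -- first derivative of Ψ
  have hΨfun : Ψ = fun t => κ t ^ m * iteratedDeriv m y t := funext hΨ
  have hΨD : ∀ s ∈ I, HasDerivAt Ψ
      ((m : ℝ) * (2 * a * s + b) / (2 * σ s) * Ψ s + κ s ^ m * iteratedDeriv (m + 1) y s) s := by
    intro s hs
    have h := (hκpow s hs).mul (hdA m s hs)
    rw [hΨ s, hΨfun]
    exact h.congr_deriv (by ring)
  -- main computation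
  intro s hs
  have hσs := hσpos s hs
  have hSne : σ s ≠ 0 := ne_of_gt hσs
  have hode := hODE m s hs
  have hd1 : deriv Ψ s = (m : ℝ) * (2 * a * s + b) / (2 * σ s) * Ψ s
      + κ s ^ m * iteratedDeriv (m + 1) y s := (hΨD s hs).deriv
  have hΦ : HasDerivAt (fun t => (m : ℝ) * (2 * a * t + b) / (2 * σ t) * Ψ t
        + κ t ^ m * iteratedDeriv (m + 1) y t)
      ((((m : ℝ) * (2 * a) * (2 * σ s) - (m : ℝ) * (2 * a * s + b) * (2 * (2 * a * s + b)))
          / (2 * σ s) ^ 2) * Ψ s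
        + ((m : ℝ) * (2 * a * s + b) / (2 * σ s))
            * ((m : ℝ) * (2 * a * s + b) / (2 * σ s) * Ψ s
              + κ s ^ m * iteratedDeriv (m + 1) y s)
        + (((m : ℝ) * (2 * a * s + b) / (2 * σ s) * κ s ^ m) * iteratedDeriv (m + 1) y s
          + κ s ^ m * iteratedDeriv (m + 2) y s)) s := by
    have hnum : HasDerivAt (fun t : ℝ => (m : ℝ) * (2 * a * t + b)) ((m : ℝ) * (2 * a)) s := by
      have h2 : HasDerivAt (fun t : ℝ => 2 * a * t + b) (2 * a) s := by
        have := ((hasDerivAt_id s).const_mul (2 * a)).add_const b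
        exact this.congr_deriv (by ring)
      exact h2.const_mul _
    have hden : HasDerivAt (fun t : ℝ => 2 * σ t) (2 * (2 * a * s + b)) s :=
      (hσD s).const_mul 2
    have hdne : 2 * σ s ≠ 0 := mul_ne_zero two_ne_zero hSne
    exact ((hnum.div hden hdne).mul (hΨD s hs)).add
      ((hκpow s hs).mul (hdA (m + 1) s hs))
  have hd2 : deriv (deriv Ψ) s =
      (((m : ℝ) * (2 * a) * (2 * σ s) - (m : ℝ) * (2 * a * s + b) * (2 * (2 * a * s + b)))
          / (2 * σ s) ^ 2) * Ψ s
        + ((m : ℝ) * (2 * a * s + b) / (2 * σ s))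
            * ((m : ℝ) * (2 * a * s + b) / (2 * σ s) * Ψ s
              + κ s ^ m * iteratedDeriv (m + 1) y s)
        + (((m : ℝ) * (2 * a * s + b) / (2 * σ s) * κ s ^ m) * iteratedDeriv (m + 1) y s
          + κ s ^ m * iteratedDeriv (m + 2) y s) := by
    have hev : deriv Ψ =ᶠ[nhds s] (fun t => (m : ℝ) * (2 * a * t + b) / (2 * σ t) * Ψ t
        + κ t ^ m * iteratedDeriv (m + 1) y t) :=
      Filter.eventuallyEq_of_mem (hI.mem_nhds hs) (fun t ht => (hΨD t ht).deriv)
    rw [hev.deriv_eq]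
    exact hΦ.deriv
  rw [hd2, hd1, hΨ s]
  exact hm_algebra (σ s) (τ s) (2 * a * s + b) a d (lam l) (m : ℝ) (κ s ^ m)
    (iteratedDeriv m y s) (iteratedDeriv (m + 1) y s) (iteratedDeriv (m + 2) y s) hSne hode
end

section
/- Let l, m be natural numbers and let y be infinitely differentiable on I satisfying σ(s) y''(s) + τ(s) y'(s) + λ_l y(s) = 0 on I. With Ψ_{l,m}(s) = κ(s)^m y^{(m)}(s), the lowering relation (A_m^+ Ψ_{l,m+1})(s) = (λ_l − λ_m) Ψ_{l,m}(s), i.e. −κ(s)(d/ds)Ψ_{l,m+1}(s) − (τ(s)/κ(s)) Ψ_{l,m+1}(s) − (m−1)κ'(s) Ψ_{l,m+1}(s) = (λ_l − λ_m) Ψ_{l,m}(s), holds for all s in I. -/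
open scoped ContDiff


/-- If `y` is infinitely differentiable on the nonempty open
interval `I` (on which `σ > 0`) and satisfies `σ y'' + τ y' + λ_l y = 0`,
then with `Ψ_{l,m}(s) = κ(s)^m y^{(m)}(s)`, `κ = √σ`, the lowering relation
`-κ Ψ_{l,m+1}' - (τ/κ) Ψ_{l,m+1} - (m-1) κ' Ψ_{l,m+1} = (λ_l - λ_m) Ψ_{l,m}`
holds on `I`. -/
theorem lowering_relation_Am_plus
    (a b c d e : ℝ) (σ τ : ℝ → ℝ)
    (hσ : ∀ s, σ s = a * s ^ 2 + b * s + c)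
    (hτ : ∀ s, τ s = d * s + e)
    (lam : ℕ → ℝ)
    (hlam : ∀ j : ℕ, lam j = -(j : ℝ) * ((j : ℝ) - 1) * a - (j : ℝ) * d)
    (I : Set ℝ) (hI : IsOpen I) (hIne : I.Nonempty) (hIconn : I.OrdConnected)
    (hσpos : ∀ s ∈ I, 0 < σ s)
    (κ : ℝ → ℝ) (hκ : ∀ s, κ s = Real.sqrt (σ s))
    (l m : ℕ) (y : ℝ → ℝ) (hy : ContDiffOn ℝ (⊤ : ℕ∞) y I)
    (heq : ∀ s ∈ I, σ s * deriv (deriv y) s + τ s * deriv y s + lam l * y s = 0)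
    (Ψ : ℕ → ℝ → ℝ) (hΨ : ∀ k s, Ψ k s = κ s ^ k * iteratedDeriv k y s) :
    ∀ s ∈ I,
      -κ s * deriv (Ψ (m + 1)) s - (τ s / κ s) * Ψ (m + 1) s
        - ((m : ℝ) - 1) * deriv κ s * Ψ (m + 1) s
      = (lam l - lam m) * Ψ m s := by
  -- smoothness of the iterated derivatives
  have hy' : ContDiffOn ℝ ∞ y I := hy.of_le (by simp)
  have hCn : ∀ n : ℕ, ContDiffOn ℝ ∞ (iteratedDeriv n y) I := by
    intro n
    induction n with
    | zero => simpa [iteratedDeriv_zero] using hy'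
    | succ n ih =>
      rw [iteratedDeriv_succ]
      exact ((contDiffOn_infty_iff_deriv_of_isOpen hI).1 ih).2
  have hdiff : ∀ n : ℕ, ∀ s ∈ I, DifferentiableAt ℝ (iteratedDeriv n y) s := fun n s hs =>
    (((hCn n).differentiableOn (by norm_num)).differentiableAt (hI.mem_nhds hs))
  have hder : ∀ n : ℕ, ∀ s ∈ I, HasDerivAt (iteratedDeriv n y) (iteratedDeriv (n + 1) y s) s := by
    intro n s hs
    rw [iteratedDeriv_succ]
    exact (hdiff n s hs).hasDerivAt
  -- derivative of the polynomial σ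
  have hp : ∀ s : ℝ, HasDerivAt (fun x : ℝ => a * x ^ 2 + b * x + c) (2 * a * s + b) s := by
    intro s
    have h := (((hasDerivAt_pow 2 s).const_mul a).add ((hasDerivAt_id s).const_mul b)).add_const c
    refine h.congr_deriv ?_
    norm_num
    ring
  -- the key ODE identity for iterated derivatives
  have key : ∀ n : ℕ, ∀ s ∈ I,
      σ s * iteratedDeriv (n + 2) y s + (τ s + n * (2 * a * s + b)) * iteratedDeriv (n + 1) y s
        + (lam l - lam n) * iteratedDeriv n y s = 0 := by
    intro n
    induction n with
    | zero =>
      intro s hs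
      have h := heq s hs
      have h2 : iteratedDeriv 2 y = deriv (deriv y) := by
        rw [iteratedDeriv_succ, iteratedDeriv_one]
      rw [h2, iteratedDeriv_one, iteratedDeriv_zero, hlam 0]
      push_cast
      linear_combination h
    | succ n ih =>
      intro s hs
      -- the function that vanishes on I
      set F : ℝ → ℝ := fun x =>
        σ x * iteratedDeriv (n + 2) y x + (τ x + n * (2 * a * x + b)) * iteratedDeriv (n + 1) y x
          + (lam l - lam n) * iteratedDeriv n y x with hF
      have hFd : HasDerivAt F
          ((2 * a * s + b) * iteratedDeriv (n + 2) y s + σ s * iteratedDeriv (n + 3) y s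
            + (d + n * (2 * a)) * iteratedDeriv (n + 1) y s
            + (τ s + n * (2 * a * s + b)) * iteratedDeriv (n + 2) y s
            + (lam l - lam n) * iteratedDeriv (n + 1) y s) s := by
        have hσd : HasDerivAt σ (2 * a * s + b) s := by
          have := hp s
          rwa [show (fun x : ℝ => a * x ^ 2 + b * x + c) = σ from (funext hσ).symm] at this
        have hτd : HasDerivAt (fun x => τ x + n * (2 * a * x + b)) (d + n * (2 * a)) s := by
          have h1 : HasDerivAt τ d s := by
            have h : HasDerivAt (fun x : ℝ => d * x + e) d s := by
              simpa using ((hasDerivAt_id s).const_mul d).add_const e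
            rwa [show (fun x : ℝ => d * x + e) = τ from (funext hτ).symm] at h
          have h2 : HasDerivAt (fun x : ℝ => (n : ℝ) * (2 * a * x + b)) ((n : ℝ) * (2 * a)) s := by
            have := (((hasDerivAt_id s).const_mul (2 * a)).add_const b).const_mul (n : ℝ)
            simpa using this
          exact h1.add h2
        have t1 := (hσd.mul (hder (n + 2) s hs))
        have t2 := (hτd.mul (hder (n + 1) s hs))
        have t3 := ((hder n s hs).const_mul (lam l - lam n))
        have := (t1.add t2).add t3
        refine this.congr_deriv ?_
        ring
      have hF0 : deriv F s = 0 := by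
        have hev : F =ᶠ[nhds s] (fun _ => (0 : ℝ)) :=
          Filter.eventuallyEq_of_mem (hI.mem_nhds hs) fun x hx => ih x hx
        rw [hev.deriv_eq]
        simp
      have hzero := hFd.deriv
      rw [hF0] at hzero
      rw [hlam l, hlam (n + 1)] at *
      rw [hlam n] at hzero
      push_cast at hzero ⊢
      linear_combination -hzero
  -- now the main computation at a point s ∈ I
  intro s hs
  have hA : 0 < σ s := hσpos s hs
  have hKpos : 0 < Real.sqrt (σ s) := Real.sqrt_pos.mpr hA
  set K : ℝ := Real.sqrt (σ s) with hK
  have hK2 : K ^ 2 = σ s := Real.sq_sqrt hA.le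
  have hKne : K ≠ 0 := ne_of_gt hKpos
  -- derivative of κ at s
  have hσd : HasDerivAt σ (2 * a * s + b) s := by
    have := hp s
    rwa [show (fun x : ℝ => a * x ^ 2 + b * x + c) = σ from (funext hσ).symm] at this
  have hκfun : κ = fun x => Real.sqrt (σ x) := funext hκ
  have hκd : HasDerivAt κ ((2 * a * s + b) / (2 * K)) s := by
    rw [hκfun]
    exact hσd.sqrt hA.ne'
  -- derivative of Ψ (m+1) at s
  have hΨfun : Ψ (m + 1) = fun x => κ x ^ (m + 1) * iteratedDeriv (m + 1) y x :=
    funext fun x => hΨ (m + 1) x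
  have hΨd : HasDerivAt (Ψ (m + 1))
      ((↑(m + 1) * κ s ^ m * ((2 * a * s + b) / (2 * K))) * iteratedDeriv (m + 1) y s
        + κ s ^ (m + 1) * iteratedDeriv (m + 2) y s) s := by
    rw [hΨfun]
    exact (hκd.pow (m + 1)).mul (hder (m + 1) s hs)
  have hκs : κ s = K := hκ s
  have hk := key m s hs
  rw [hΨd.deriv, hκd.deriv, hΨ (m + 1) s, hΨ m s, hκs]
  push_cast
  field_simp
  linear_combination (-2 * K * K ^ m) * hk - 2 * K * K ^ m * iteratedDeriv (m + 2) y s * hK2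
end

section
/- Let l be a natural number, let m ≥ 1 be a natural number, and let y be infinitely differentiable on I satisfying σ(s) y''(s) + τ(s) y'(s) + λ_l y(s) = 0 on I. With Ψ_{l,m}(s) = κ(s)^m y^{(m)}(s), the three term recurrence Ψ_{l,m+1}(s) + [ τ(s)/κ(s) + 2(m−1)κ'(s) ] Ψ_{l,m}(s) + (λ_l − λ_{m−1}) Ψ_{l,m−1}(s) = 0 holds for all s in I. -/
/-- If `y` is infinitely differentiable on the nonempty open
interval `I` (on which `σ > 0`) and satisfies `σ y'' + τ y' + λ_l y = 0`,
then for `m ≥ 1`, with `Ψ_{l,m}(s) = κ(s)^m y^{(m)}(s)`, `κ = √σ`, the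
three term recurrence
`Ψ_{l,m+1} + [τ/κ + 2(m-1)κ'] Ψ_{l,m} + (λ_l - λ_{m-1}) Ψ_{l,m-1} = 0`
holds on `I`. -/
theorem three_term_recurrence_associated_functions
    (a b c d e : ℝ) (σ τ : ℝ → ℝ)
    (hσ : ∀ s, σ s = a * s ^ 2 + b * s + c)
    (hτ : ∀ s, τ s = d * s + e)
    (lam : ℕ → ℝ)
    (hlam : ∀ j : ℕ, lam j = -(j : ℝ) * ((j : ℝ) - 1) * a - (j : ℝ) * d)
    (I : Set ℝ) (hI : IsOpen I) (hIne : I.Nonempty) (hIconn : I.OrdConnected)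
    (hσpos : ∀ s ∈ I, 0 < σ s)
    (κ : ℝ → ℝ) (hκ : ∀ s, κ s = Real.sqrt (σ s))
    (l m : ℕ) (hm : 1 ≤ m) (y : ℝ → ℝ) (hy : ContDiffOn ℝ (⊤ : ℕ∞) y I)
    (heq : ∀ s ∈ I, σ s * deriv (deriv y) s + τ s * deriv y s + lam l * y s = 0)
    (Ψ : ℕ → ℝ → ℝ) (hΨ : ∀ k s, Ψ k s = κ s ^ k * iteratedDeriv k y s) :
    ∀ s ∈ I,
      Ψ (m + 1) s
        + (τ s / κ s + 2 * ((m : ℝ) - 1) * deriv κ s) * Ψ m s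
        + (lam l - lam (m - 1)) * Ψ (m - 1) s = 0 := by
  -- σ and τ as explicit functions
  have hσf : σ = fun s => a * s ^ 2 + b * s + c := funext hσ
  have hτf : τ = fun s => d * s + e := funext hτ
  have hσdiff : ∀ s : ℝ, DifferentiableAt ℝ σ s := by
    rw [hσf]; intro s; fun_prop
  have hτdiff : ∀ s : ℝ, DifferentiableAt ℝ τ s := by
    rw [hτf]; intro s; fun_prop
  have hσ' : ∀ s : ℝ, deriv σ s = 2 * a * s + b := by
    intro s; rw [hσf]
    have : deriv (fun s : ℝ => a * s ^ 2 + b * s + c) s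
        = deriv (fun s : ℝ => a * s ^ 2 + b * s) s + deriv (fun _ : ℝ => c) s := by
      apply deriv_add (by fun_prop) (by fun_prop)
    rw [this, deriv_const]
    have : deriv (fun s : ℝ => a * s ^ 2 + b * s) s
        = deriv (fun s : ℝ => a * s ^ 2) s + deriv (fun s : ℝ => b * s) s := by
      apply deriv_add (by fun_prop) (by fun_prop)
    rw [this, deriv_const_mul _ (by fun_prop), deriv_const_mul _ (by fun_prop),
      deriv_pow_field, deriv_id'']
    ring
  have hτ' : ∀ s : ℝ, deriv τ s = d := by
    intro s; rw [hτf]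
    have : deriv (fun s : ℝ => d * s + e) s
        = deriv (fun s : ℝ => d * s) s + deriv (fun _ : ℝ => e) s := by
      apply deriv_add (by fun_prop) (by fun_prop)
    rw [this, deriv_const, deriv_const_mul _ (by fun_prop), deriv_id'']
    ring
  -- iterated derivatives are smooth on I
  have hit : ∀ n : ℕ, ContDiffOn ℝ (⊤ : ℕ∞) (iteratedDeriv n y) I := by
    intro n; induction n with
    | zero => simpa [iteratedDeriv_zero] using hy
    | succ n ih =>
      rw [iteratedDeriv_succ]
      exact ih.deriv_of_isOpen hI (le_of_eq (by simp))
  have hdiffAt : ∀ (n : ℕ) (s : ℝ), s ∈ I → DifferentiableAt ℝ (iteratedDeriv n y) s := by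
    intro n s hs
    exact ((hit n).differentiableOn (by simp)).differentiableAt (hI.mem_nhds hs)
  -- the key differentiated equation, by induction on k
  have key : ∀ k : ℕ, ∀ s ∈ I,
      σ s * iteratedDeriv (k + 2) y s + (τ s + (k : ℝ) * (2 * a * s + b)) *
        iteratedDeriv (k + 1) y s + (lam l - lam k) * iteratedDeriv k y s = 0 := by
    intro k
    induction k with
    | zero =>
      intro s hs
      have h0 := heq s hs
      have h1 : iteratedDeriv 1 y = deriv y := by
        rw [iteratedDeriv_succ, iteratedDeriv_zero]
      have h2 : iteratedDeriv 2 y = deriv (deriv y) := by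
        rw [iteratedDeriv_succ, h1]
      rw [h1, h2, iteratedDeriv_zero, hlam 0]
      push_cast
      nlinarith [h0]
    | succ k ih =>
      intro s hs
      set F : ℝ → ℝ := fun t => σ t * iteratedDeriv (k + 2) y t +
        (τ t + (k : ℝ) * (2 * a * t + b)) * iteratedDeriv (k + 1) y t +
        (lam l - lam k) * iteratedDeriv k y t with hF
      have hF0 : ∀ t ∈ I, F t = 0 := fun t ht => ih t ht
      have hFd : deriv F s = 0 := by
        have hev : F =ᶠ[nhds s] (fun _ => (0 : ℝ)) := by
          filter_upwards [hI.mem_nhds hs] with t ht using hF0 t ht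
        rw [hev.deriv_eq, deriv_const]
      -- compute deriv F s via product/sum rules
      have dA : HasDerivAt (fun t => σ t * iteratedDeriv (k + 2) y t)
          (deriv σ s * iteratedDeriv (k + 2) y s + σ s * iteratedDeriv (k + 3) y s) s := by
        have h1 : HasDerivAt σ (deriv σ s) s := (hσdiff s).hasDerivAt
        have h2 : HasDerivAt (iteratedDeriv (k + 2) y) (iteratedDeriv (k + 3) y s) s := by
          have := (hdiffAt (k + 2) s hs).hasDerivAt
          rwa [show iteratedDeriv (k+3) y s = deriv (iteratedDeriv (k+2) y) s from by
            rw [iteratedDeriv_succ]]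
        exact h1.mul h2
      have dB : HasDerivAt (fun t => (τ t + (k : ℝ) * (2 * a * t + b)) *
          iteratedDeriv (k + 1) y t)
          ((deriv τ s + (k : ℝ) * (2 * a)) * iteratedDeriv (k + 1) y s +
            (τ s + (k : ℝ) * (2 * a * s + b)) * iteratedDeriv (k + 2) y s) s := by
        have h1 : HasDerivAt (fun t => τ t + (k : ℝ) * (2 * a * t + b))
            (deriv τ s + (k : ℝ) * (2 * a)) s := by
          have ht : HasDerivAt τ (deriv τ s) s := (hτdiff s).hasDerivAt
          have hl : HasDerivAt (fun t : ℝ => (k : ℝ) * (2 * a * t + b)) ((k : ℝ) * (2 * a)) s := by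
            have : HasDerivAt (fun t : ℝ => 2 * a * t + b) (2 * a) s := by
              simpa using ((hasDerivAt_id s).const_mul (2 * a)).add_const b
            exact this.const_mul _
          exact ht.add hl
        have h2 : HasDerivAt (iteratedDeriv (k + 1) y) (iteratedDeriv (k + 2) y s) s := by
          have := (hdiffAt (k + 1) s hs).hasDerivAt
          rwa [show iteratedDeriv (k+2) y s = deriv (iteratedDeriv (k+1) y) s from by
            rw [iteratedDeriv_succ]]
        exact h1.mul h2
      have dC : HasDerivAt (fun t => (lam l - lam k) * iteratedDeriv k y t)
          ((lam l - lam k) * iteratedDeriv (k + 1) y s) s := by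
        have h2 : HasDerivAt (iteratedDeriv k y) (iteratedDeriv (k + 1) y s) s := by
          have := (hdiffAt k s hs).hasDerivAt
          rwa [show iteratedDeriv (k+1) y s = deriv (iteratedDeriv k y) s from by
            rw [iteratedDeriv_succ]]
        exact h2.const_mul _
      have dF : HasDerivAt F
          (deriv σ s * iteratedDeriv (k + 2) y s + σ s * iteratedDeriv (k + 3) y s +
            ((deriv τ s + (k : ℝ) * (2 * a)) * iteratedDeriv (k + 1) y s +
              (τ s + (k : ℝ) * (2 * a * s + b)) * iteratedDeriv (k + 2) y s) +
            (lam l - lam k) * iteratedDeriv (k + 1) y s) s := (dA.add dB).add dC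
      have hder := dF.deriv
      rw [hFd] at hder
      -- now conclude
      have hl1 : lam (k + 1) = lam k - (2 * (k : ℝ) * a + d) := by
        rw [hlam (k + 1), hlam k]; push_cast; ring
      have hσs := hσ' s
      have hτs := hτ' s
      have hcast : ((k + 1 : ℕ) : ℝ) = (k : ℝ) + 1 := by push_cast; ring
      have e3 : k + 1 + 2 = k + 3 := by ring
      have e2 : k + 1 + 1 = k + 2 := by ring
      rw [e3, e2, hl1, hcast]
      rw [hσs, hτs] at hder
      nlinarith [hder]
  -- conclude: multiply the equation for k = m - 1 by κ s ^ (m - 1)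
  intro s hs
  obtain ⟨k, rfl⟩ : ∃ k, m = k + 1 := ⟨m - 1, (Nat.succ_pred_eq_of_pos hm).symm⟩
  have hmain := key k s hs
  have hσs := hσpos s hs
  have hκpos : 0 < κ s := by rw [hκ s]; exact Real.sqrt_pos.2 hσs
  have hκsq : κ s ^ 2 = σ s := by rw [hκ s]; exact Real.sq_sqrt hσs.le
  have hκderiv : deriv κ s = (2 * a * s + b) / (2 * κ s) := by
    have : κ = fun t => Real.sqrt (σ t) := funext hκ
    rw [this, deriv_sqrt (hσdiff s) (ne_of_gt hσs), hσ' s]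
  have hmsub : (k + 1) - 1 = k := by omega
  rw [hΨ, hΨ, hΨ, hmsub, hκderiv]
  have hcast : ((k + 1 : ℕ) : ℝ) = (k : ℝ) + 1 := by push_cast; ring
  rw [hcast]
  have hκne : κ s ≠ 0 := ne_of_gt hκpos
  have expand1 : κ s ^ (k + 1 + 1) = κ s ^ k * σ s := by
    rw [← hκsq]; ring
  have expand2 : κ s ^ (k + 1) = κ s ^ k * κ s := by ring
  have e2 : k + 1 + 1 = k + 2 := by ring
  rw [expand1, expand2, e2]
  field_simp
  linear_combination (κ s ^ k) * hmain
end

section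
/- For every natural number m and every twice differentiable function f on I, the factorization (H_m f)(s) − λ_m f(s) = (A_m^+ (A_m f))(s) holds for all s in I. -/
/-!
Writing `κ'` and `κ''` for the derivatives of `κ = √σ`, expanding `A_m^+ (A_m f)` gives
`-σ f'' - τ f' + m (κ κ'' + (m - 1) κ'² + τ κ' / κ) f`: the `f'` terms cancel identically.
Differentiating `κ κ' = σ' / 2` gives `κ κ'' = σ'' / 2 - κ'²`, and with `κ'² = σ'² / (4σ)` the
coefficient of `f` becomes that of `H_m - λ_m`; the `τ'` terms of `H_m` and `λ_m` cancel.
-/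

open Filter Topology

/-- The operator `A_m`. -/
noncomputable def lowering (κ : ℝ → ℝ) (m : ℝ) (f : ℝ → ℝ) : ℝ → ℝ :=
  fun s => κ s * deriv f s - m * deriv κ s * f s

/-- The operator `A_m^+`. -/
noncomputable def raising (κ τ : ℝ → ℝ) (m : ℝ) (g : ℝ → ℝ) : ℝ → ℝ :=
  fun s => -κ s * deriv g s - τ s / κ s * g s - (m - 1) * deriv κ s * g s

section Factorization

variable {κ τ f : ℝ → ℝ} {m s : ℝ}

theorem hasDerivAt_lowering (hκ : DifferentiableAt ℝ κ s)
    (hκ' : DifferentiableAt ℝ (deriv κ) s) (hf : DifferentiableAt ℝ f s)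
    (hf' : DifferentiableAt ℝ (deriv f) s) :
    HasDerivAt (lowering κ m f)
      (deriv κ s * deriv f s + κ s * deriv (deriv f) s
        - m * (deriv (deriv κ) s * f s + deriv κ s * deriv f s)) s := by
  have := (hκ.hasDerivAt.mul hf'.hasDerivAt).sub
    ((hκ'.hasDerivAt.const_mul m).mul hf.hasDerivAt)
  exact this.congr_deriv (by ring)

theorem raising_lowering_apply (hκ : DifferentiableAt ℝ κ s) (hκ0 : κ s ≠ 0)
    (hκ' : DifferentiableAt ℝ (deriv κ) s) (hf : DifferentiableAt ℝ f s)
    (hf' : DifferentiableAt ℝ (deriv f) s) :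
    raising κ τ m (lowering κ m f) s =
      -κ s ^ 2 * deriv (deriv f) s - τ s * deriv f s
        + m * (κ s * deriv (deriv κ) s + (m - 1) * deriv κ s ^ 2
          + τ s * deriv κ s / κ s) * f s := by
  rw [raising, (hasDerivAt_lowering hκ hκ' hf hf').deriv, lowering]
  field_simp
  ring

end Factorization

section SquareRoot

variable {σ σ' : ℝ → ℝ} {σ'' s : ℝ} {U : Set ℝ}

/-- Differentiate `κ κ' = σ' / 2` for `κ = √σ`. -/
theorem hasDerivAt_deriv_sqrt (hU : IsOpen U) (hs : s ∈ U) (hpos : ∀ t ∈ U, 0 < σ t)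
    (hσ : ∀ t ∈ U, HasDerivAt σ (σ' t) t) (hσ' : HasDerivAt σ' σ'' s) :
    HasDerivAt (deriv fun t => √(σ t))
      ((σ'' / 2 - deriv (fun t => √(σ t)) s ^ 2) / √(σ s)) s := by
  have hsqrt : HasDerivAt (fun t => √(σ t)) (σ' s / (2 * √(σ s))) s :=
    (hσ s hs).sqrt (hpos s hs).ne'
  have hκ0 : √(σ s) ≠ 0 := (Real.sqrt_pos.mpr (hpos s hs)).ne'
  have hquot := hσ'.div (hsqrt.const_mul 2) (mul_ne_zero two_ne_zero hκ0)
  have heq : deriv (fun t => √(σ t)) =ᶠ[𝓝 s] fun t => σ' t / (2 * √(σ t)) := by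
    filter_upwards [hU.mem_nhds hs] with t ht
    exact ((hσ t ht).sqrt (hpos t ht).ne').deriv
  refine (hquot.congr_of_eventuallyEq heq).congr_deriv ?_
  rw [hsqrt.deriv]
  field_simp

end SquareRoot

theorem hasDerivAt_quadratic (a b c t : ℝ) :
    HasDerivAt (fun x => a * x ^ 2 + b * x + c) (2 * a * t + b) t := by
  have := (((hasDerivAt_pow 2 t).const_mul a).add ((hasDerivAt_id t).const_mul b)).add_const c
  exact this.congr_deriv (by push_cast; ring)

theorem ContDiffOn.differentiableAt_deriv {f : ℝ → ℝ} {U : Set ℝ} {s : ℝ}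
    (hf : ContDiffOn ℝ 2 f U) (hU : IsOpen U) (hs : s ∈ U) :
    DifferentiableAt ℝ (deriv f) s :=
  ((hf.deriv_of_isOpen hU (m := 1) (by norm_num)).differentiableOn one_ne_zero s hs)
    |>.differentiableAt (hU.mem_nhds hs)

theorem factorization_Hm_eq_Am_plus_Am_general
    (a b c d : ℝ) (σ τ : ℝ → ℝ)
    (hσ : ∀ s, σ s = a * s ^ 2 + b * s + c)
    (lam : ℕ → ℝ)
    (hlam : ∀ j : ℕ, lam j = -(j : ℝ) * ((j : ℝ) - 1) * a - (j : ℝ) * d)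
    (I : Set ℝ) (hI : IsOpen I)
    (hσpos : ∀ s ∈ I, 0 < σ s)
    (κ : ℝ → ℝ) (hκ : ∀ s, κ s = Real.sqrt (σ s))
    (m : ℕ) (f : ℝ → ℝ) (hf : ContDiffOn ℝ 2 f I)
    (Af : ℝ → ℝ) (hAf : ∀ s, Af s = κ s * deriv f s - (m : ℝ) * deriv κ s * f s) :
    ∀ s ∈ I,
      (-σ s * deriv (deriv f) s - τ s * deriv f s
          + ((m : ℝ) * ((m : ℝ) - 2) * (2 * a * s + b) ^ 2 / (4 * σ s)
              + (m : ℝ) * τ s * (2 * a * s + b) / (2 * σ s)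
              - (m : ℝ) * ((m : ℝ) - 2) * (2 * a) / 2
              - (m : ℝ) * d) * f s)
        - lam m * f s
      = -κ s * deriv Af s - (τ s / κ s) * Af s - ((m : ℝ) - 1) * deriv κ s * Af s := by
  intro s hs
  obtain rfl : Af = lowering κ m f := funext hAf
  change _ = raising κ τ m (lowering κ m f) s
  obtain rfl : κ = fun t => √(σ t) := funext hκ
  have hσs := hσpos s hs
  have hσ' (t : ℝ) (_ : t ∈ I) : HasDerivAt σ (2 * a * t + b) t := by
    rw [show σ = _ from funext hσ]
    exact hasDerivAt_quadratic a b c t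
  have hκ' := (hσ' s hs).sqrt hσs.ne'
  have hκ'' := hasDerivAt_deriv_sqrt hI hs hσpos hσ'
    (((hasDerivAt_id' s).const_mul (2 * a)).add_const b |>.congr_deriv (mul_one _))
  have hfd := (hf.differentiableOn (by norm_num) s hs).differentiableAt (hI.mem_nhds hs)
  rw [raising_lowering_apply hκ'.differentiableAt (Real.sqrt_pos.mpr hσs).ne'
      hκ''.differentiableAt hfd (hf.differentiableAt_deriv hI hs),
    hκ''.deriv, hκ'.deriv, hlam]
  field_simp
  rw [Real.sq_sqrt hσs.le]
  ring

/-- For every `m : ℕ` and every twice differentiable function `f`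
on the nonempty open interval `I` (on which `σ > 0`), the factorization
`H_m f - λ_m f = A_m^+ (A_m f)` holds on `I`, where
`A_m f = κ f' - m κ' f`, `A_m^+ f = -κ f' - (τ/κ) f - (m-1) κ' f`, and
`H_m f = -σ f'' - τ f' + [m(m-2)σ'²/(4σ) + mτσ'/(2σ) - m(m-2)σ''/2 - mτ'] f`. -/
theorem factorization_Hm_eq_Am_plus_Am
    (a b c d e : ℝ) (σ τ : ℝ → ℝ)
    (hσ : ∀ s, σ s = a * s ^ 2 + b * s + c)
    (hτ : ∀ s, τ s = d * s + e)
    (lam : ℕ → ℝ)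
    (hlam : ∀ j : ℕ, lam j = -(j : ℝ) * ((j : ℝ) - 1) * a - (j : ℝ) * d)
    (I : Set ℝ) (hI : IsOpen I) (hIne : I.Nonempty) (hIconn : I.OrdConnected)
    (hσpos : ∀ s ∈ I, 0 < σ s)
    (κ : ℝ → ℝ) (hκ : ∀ s, κ s = Real.sqrt (σ s))
    (m : ℕ) (f : ℝ → ℝ) (hf : ContDiffOn ℝ 2 f I)
    (Af : ℝ → ℝ) (hAf : ∀ s, Af s = κ s * deriv f s - (m : ℝ) * deriv κ s * f s) :
    ∀ s ∈ I,
      (-σ s * deriv (deriv f) s - τ s * deriv f s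
          + ((m : ℝ) * ((m : ℝ) - 2) * (2 * a * s + b) ^ 2 / (4 * σ s)
              + (m : ℝ) * τ s * (2 * a * s + b) / (2 * σ s)
              - (m : ℝ) * ((m : ℝ) - 2) * (2 * a) / 2
              - (m : ℝ) * d) * f s)
        - lam m * f s
      = -κ s * deriv Af s - (τ s / κ s) * Af s - ((m : ℝ) - 1) * deriv κ s * Af s :=
  factorization_Hm_eq_Am_plus_Am_general a b c d σ τ hσ lam hlam I hI hσpos κ hκ m f hf Af hAf
end

section
/- For every natural number m and every twice differentiable function f on I, the factorization (H_{m+1} f)(s) − λ_m f(s) = (A_m (A_m^+ f))(s) holds for all s in I. -/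
/-!
Write `σ = κ²`. For any nonvanishing `κ`, expanding `A_m (A_m^+ f)` the `κ κ' f'` terms cancel and
what is left is `-κ² f'' - τ f' + [m(m-1)κ'² - (m-1)κκ'' + (m+1)τκ'/κ - τ'] f`. For `κ = √σ`,
differentiating `κ² = σ` gives `κ' = σ'/(2κ)` and `κκ'' = σ''/2 - κ'²`, which turns the bracket into
`(m+1)(m-1)σ'²/(4σ) + (m+1)τσ'/(2σ) - (m-1)σ''/2 - τ'`, the potential of `H_{m+1} - λ_m`.
-/

open Filter Topology

noncomputable def ladderA (κ : ℝ → ℝ) (m : ℝ) (g : ℝ → ℝ) : ℝ → ℝ :=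
  fun s => κ s * deriv g s - m * deriv κ s * g s

noncomputable def ladderAPlus (κ τ : ℝ → ℝ) (m : ℝ) (f : ℝ → ℝ) : ℝ → ℝ :=
  fun s => -κ s * deriv f s - τ s / κ s * f s - (m - 1) * deriv κ s * f s

section Ladder

variable {κ τ f : ℝ → ℝ} {m s κ₂ τ₁ : ℝ}

theorem hasDerivAt_ladderAPlus (hκ : DifferentiableAt ℝ κ s) (hκ' : HasDerivAt (deriv κ) κ₂ s)
    (hτ : HasDerivAt τ τ₁ s) (hf : DifferentiableAt ℝ f s)
    (hf' : DifferentiableAt ℝ (deriv f) s) (hκs : κ s ≠ 0) :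
    HasDerivAt (ladderAPlus κ τ m f)
      (-(deriv κ s * deriv f s + κ s * deriv (deriv f) s)
        - ((τ₁ * κ s - τ s * deriv κ s) / κ s ^ 2 * f s + τ s / κ s * deriv f s)
        - (m - 1) * (κ₂ * f s + deriv κ s * deriv f s)) s :=
  ((((hκ.hasDerivAt.fun_mul hf'.hasDerivAt).fun_neg.fun_sub
    ((hτ.fun_div hκ.hasDerivAt hκs).fun_mul hf.hasDerivAt)).fun_sub
    ((hκ'.fun_mul hf.hasDerivAt).const_mul (m - 1))).congr_of_eventuallyEq
    (.of_forall fun x => by simp only [ladderAPlus]; ring))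

theorem ladderA_ladderAPlus_apply (hκ : DifferentiableAt ℝ κ s)
    (hκ' : HasDerivAt (deriv κ) κ₂ s) (hτ : HasDerivAt τ τ₁ s) (hf : DifferentiableAt ℝ f s)
    (hf' : DifferentiableAt ℝ (deriv f) s) (hκs : κ s ≠ 0) :
    ladderA κ m (ladderAPlus κ τ m f) s
      = -κ s ^ 2 * deriv (deriv f) s - τ s * deriv f s
        + (m * (m - 1) * deriv κ s ^ 2 - (m - 1) * κ s * κ₂
            + (m + 1) * τ s * deriv κ s / κ s - τ₁) * f s := by
  rw [ladderA, (hasDerivAt_ladderAPlus hκ hκ' hτ hf hf' hκs).deriv, ladderAPlus]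
  field_simp
  ring

end Ladder

section Sqrt

variable {σ σ' κ : ℝ → ℝ} {s σ₁ σ₂ : ℝ}

theorem hasDerivAt_of_eq_sqrt (hκ : ∀ x, κ x = √(σ x)) (hσ : HasDerivAt σ σ₁ s)
    (hs : σ s ≠ 0) : HasDerivAt κ (σ₁ / (2 * κ s)) s := by
  obtain rfl : κ = fun x => √(σ x) := funext hκ
  exact hσ.sqrt hs

/-- Differentiating `κ² = σ` twice gives `κ κ'' + κ'² = σ''/2`. -/
theorem hasDerivAt_deriv_of_eq_sqrt (hκ : ∀ x, κ x = √(σ x))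
    (hσ : ∀ᶠ x in 𝓝 s, HasDerivAt σ (σ' x) x) (hσ' : HasDerivAt σ' σ₂ s) (hs : 0 < σ s) :
    HasDerivAt (deriv κ) ((σ₂ / 2 - deriv κ s ^ 2) / κ s) s := by
  have hderiv : deriv κ =ᶠ[𝓝 s] fun x => σ' x / (2 * κ x) := by
    filter_upwards [hσ, hσ.self_of_nhds.continuousAt.eventually_ne hs.ne'] with x hx hx0
    exact (hasDerivAt_of_eq_sqrt hκ hx hx0).deriv
  have hκs : κ s ≠ 0 := hκ s ▸ (Real.sqrt_pos.mpr hs).ne'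
  rw [hderiv.eq_of_nhds]
  refine ((hσ'.fun_div ((hasDerivAt_of_eq_sqrt hκ hσ.self_of_nhds hs.ne').const_mul 2)
    (by positivity)).congr_of_eventuallyEq hderiv).congr_deriv ?_
  field_simp

end Sqrt

theorem hasDerivAt_of_forall_eq_affine {τ : ℝ → ℝ} {d e : ℝ} (hτ : ∀ x, τ x = d * x + e)
    (x : ℝ) : HasDerivAt τ d x := by
  rw [funext hτ]
  simpa using ((hasDerivAt_id x).const_mul d).add_const e

theorem hasDerivAt_of_forall_eq_quadratic {σ : ℝ → ℝ} {a b c : ℝ}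
    (hσ : ∀ x, σ x = a * x ^ 2 + b * x + c) (x : ℝ) : HasDerivAt σ (2 * a * x + b) x := by
  rw [funext hσ]
  exact (((hasDerivAt_pow 2 x).const_mul a).fun_add ((hasDerivAt_id x).const_mul b)).add_const c
    |>.congr_deriv (by push_cast; ring)

theorem factorization_Hm_succ_eq_Am_Am_plus_general
    (a b c d e : ℝ) (σ τ : ℝ → ℝ)
    (hσ : ∀ s, σ s = a * s ^ 2 + b * s + c)
    (hτ : ∀ s, τ s = d * s + e)
    (lam : ℕ → ℝ)
    (hlam : ∀ j : ℕ, lam j = -(j : ℝ) * ((j : ℝ) - 1) * a - (j : ℝ) * d)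
    (I : Set ℝ) (hI : IsOpen I)
    (hσpos : ∀ s ∈ I, 0 < σ s)
    (κ : ℝ → ℝ) (hκ : ∀ s, κ s = Real.sqrt (σ s))
    (m : ℕ) (f : ℝ → ℝ) (hf : ContDiffOn ℝ 2 f I)
    (Bf : ℝ → ℝ)
    (hBf : ∀ s, Bf s = -κ s * deriv f s - (τ s / κ s) * f s
        - ((m : ℝ) - 1) * deriv κ s * f s) :
    ∀ s ∈ I,
      (-σ s * deriv (deriv f) s - τ s * deriv f s
          + (((m : ℝ) + 1) * (((m : ℝ) + 1) - 2) * (2 * a * s + b) ^ 2 / (4 * σ s)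
              + ((m : ℝ) + 1) * τ s * (2 * a * s + b) / (2 * σ s)
              - ((m : ℝ) + 1) * (((m : ℝ) + 1) - 2) * (2 * a) / 2
              - ((m : ℝ) + 1) * d) * f s)
        - lam m * f s
      = κ s * deriv Bf s - (m : ℝ) * deriv κ s * Bf s := by
  intro s hs
  obtain rfl : Bf = ladderAPlus κ τ m f := funext hBf
  have hσs := hσpos s hs
  have hσ' := hasDerivAt_of_forall_eq_quadratic hσ
  have hκ' := hasDerivAt_of_eq_sqrt hκ (hσ' s) hσs.ne'
  have hκ'' := hasDerivAt_deriv_of_eq_sqrt hκ (.of_forall hσ')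
    (hasDerivAt_of_forall_eq_affine (fun _ => rfl) s) hσs
  have hκs : 0 < κ s := hκ s ▸ Real.sqrt_pos.mpr hσs
  have hf' : ContDiffOn ℝ 1 (deriv f) I := hf.deriv_of_isOpen hI (by norm_num)
  have key := ladderA_ladderAPlus_apply (m := (m : ℝ)) hκ'.differentiableAt hκ''
    (hasDerivAt_of_forall_eq_affine hτ s)
    ((hf.contDiffAt (hI.mem_nhds hs)).differentiableAt (by norm_num))
    ((hf'.contDiffAt (hI.mem_nhds hs)).differentiableAt one_ne_zero) hκs.ne'
  rw [ladderA] at key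
  have hσκ : σ s = κ s ^ 2 := by rw [hκ, Real.sq_sqrt hσs.le]
  rw [key, hκ'.deriv, hlam, hτ, hσκ]
  field_simp
  ring

/-- For every `m : ℕ` and every twice differentiable function `f`
on the nonempty open interval `I` (on which `σ > 0`), the factorization
`H_{m+1} f - λ_m f = A_m (A_m^+ f)` holds on `I`, where
`A_m f = κ f' - m κ' f`, `A_m^+ f = -κ f' - (τ/κ) f - (m-1) κ' f`, and
`H_m f = -σ f'' - τ f' + [m(m-2)σ'²/(4σ) + mτσ'/(2σ) - m(m-2)σ''/2 - mτ'] f`. -/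
theorem factorization_Hm_succ_eq_Am_Am_plus
    (a b c d e : ℝ) (σ τ : ℝ → ℝ)
    (hσ : ∀ s, σ s = a * s ^ 2 + b * s + c)
    (hτ : ∀ s, τ s = d * s + e)
    (lam : ℕ → ℝ)
    (hlam : ∀ j : ℕ, lam j = -(j : ℝ) * ((j : ℝ) - 1) * a - (j : ℝ) * d)
    (I : Set ℝ) (hI : IsOpen I) (hIne : I.Nonempty) (hIconn : I.OrdConnected)
    (hσpos : ∀ s ∈ I, 0 < σ s)
    (κ : ℝ → ℝ) (hκ : ∀ s, κ s = Real.sqrt (σ s))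
    (m : ℕ) (f : ℝ → ℝ) (hf : ContDiffOn ℝ 2 f I)
    (Bf : ℝ → ℝ)
    (hBf : ∀ s, Bf s = -κ s * deriv f s - (τ s / κ s) * f s
        - ((m : ℝ) - 1) * deriv κ s * f s) :
    ∀ s ∈ I,
      (-σ s * deriv (deriv f) s - τ s * deriv f s
          + (((m : ℝ) + 1) * (((m : ℝ) + 1) - 2) * (2 * a * s + b) ^ 2 / (4 * σ s)
              + ((m : ℝ) + 1) * τ s * (2 * a * s + b) / (2 * σ s)
              - ((m : ℝ) + 1) * (((m : ℝ) + 1) - 2) * (2 * a) / 2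
              - ((m : ℝ) + 1) * d) * f s)
        - lam m * f s
      = κ s * deriv Bf s - (m : ℝ) * deriv κ s * Bf s :=
  factorization_Hm_succ_eq_Am_Am_plus_general a b c d e σ τ hσ hτ lam hlam I hI hσpos κ hκ m f hf Bf
    hBf
end

section
/- Let α < 0, β ∈ ℝ, ρ(s) = exp(α s²/2 + β s), and for l ∈ ℕ define Ψ_l(s) = (1/ρ(s)) · (d/ds)^l ρ(s). Then there exists a nonzero real constant c such that Ψ_l(s) = c · He_l(√(−α)·s − β/√(−α)) for all s ∈ ℝ, where He_l denotes the l-th probabilists' Hermite polynomial (so that the polynomials of hypergeometric type for σ(s) = 1, τ(s) = αs + β are, up to a multiplicative constant, Hermite polynomials in the rescaled variable). -/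
/-!
Completing the square writes `ρ(s)` as the constant `exp(-β²/(2α))` times the standard Gaussian
`exp(-x²/2)` at `x = √(-α)·s - β/√(-α)`. The `l`-th derivative of an affine substitution picks up
the factor `√(-α)^l`, and the `l`-th derivative of the Gaussian is `(-1)^l He_l(x) exp(-x²/2)`.
-/

open Polynomial Real

theorem iteratedDeriv_comp_affine {𝕜 : Type*} [NontriviallyNormedField 𝕜] {n : ℕ} {f : 𝕜 → 𝕜}
    (hf : ContDiff 𝕜 n f) (a b x : 𝕜) :
    iteratedDeriv n (fun s => f (a * s + b)) x = a ^ n * iteratedDeriv n f (a * x + b) := by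
  have hshift : ContDiff 𝕜 n (fun y => f (y + b)) := hf.comp (contDiff_id.add contDiff_const)
  rw [congrFun (iteratedDeriv_comp_const_mul hshift a) x,
    congrFun (iteratedDeriv_comp_add_const n f b) (a * x)]

theorem iteratedDeriv_gaussian (n : ℕ) (x : ℝ) :
    iteratedDeriv n (fun y => exp (-(y ^ 2 / 2))) x =
      (-1) ^ n * aeval x (hermite n) * exp (-(x ^ 2 / 2)) := by
  rw [iteratedDeriv_eq_iterate, deriv_gaussian_eq_hermite_mul_gaussian]

theorem quadratic_eq_sub_sq_of_neg {α : ℝ} (hα : α < 0) (β s : ℝ) :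
    α * s ^ 2 / 2 + β * s = -(β ^ 2 / (2 * α)) + -((√(-α) * s - β / √(-α)) ^ 2 / 2) := by
  have ha : √(-α) ≠ 0 := (sqrt_pos.2 (neg_pos.2 hα)).ne'
  have hα0 : α ≠ 0 := hα.ne
  have hsq : √(-α) ^ 2 = -α := sq_sqrt (neg_nonneg.2 hα.le)
  field_simp
  rw [hsq]
  ring

theorem iteratedDeriv_exp_quadratic {α : ℝ} (hα : α < 0) (β : ℝ) (n : ℕ) (s : ℝ) :
    iteratedDeriv n (fun s => exp (α * s ^ 2 / 2 + β * s)) s =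
      (-√(-α)) ^ n * aeval (√(-α) * s - β / √(-α)) (hermite n) *
        exp (α * s ^ 2 / 2 + β * s) := by
  have hgauss : ContDiff ℝ n fun y : ℝ => exp (-(y ^ 2 / 2)) := by fun_prop
  simp only [quadratic_eq_sub_sq_of_neg hα β, exp_add, sub_eq_add_neg (√(-α) * _)]
  rw [iteratedDeriv_const_mul_field, iteratedDeriv_comp_affine hgauss, iteratedDeriv_gaussian,
    neg_pow]
  ring

/-- For `α < 0`, `β ∈ ℝ`, `ρ(s) = exp(αs²/2 + βs)` and
`Ψ_l(s) = (1/ρ(s)) (d/ds)^l ρ(s)` (Rodrigues formula for `σ = 1`),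
there is a nonzero constant `c` with
`Ψ_l(s) = c · He_l(√(-α)·s - β/√(-α))`, where `He_l` is the `l`-th
probabilists' Hermite polynomial (`Polynomial.hermite l`). -/
theorem rodrigues_sigma_one_is_hermite
    (α β : ℝ) (hα : α < 0)
    (ρ : ℝ → ℝ) (hρ : ∀ s, ρ s = Real.exp (α * s ^ 2 / 2 + β * s))
    (l : ℕ) (Ψ : ℝ → ℝ)
    (hΨ : ∀ s, Ψ s = (1 / ρ s) * iteratedDeriv l ρ s) :
    ∃ c : ℝ, c ≠ 0 ∧ ∀ s : ℝ,
      Ψ s = c * Polynomial.aeval (Real.sqrt (-α) * s - β / Real.sqrt (-α))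
              (Polynomial.hermite l) := by
  have hρfun : ρ = fun s => exp (α * s ^ 2 / 2 + β * s) := funext hρ
  refine ⟨(-√(-α)) ^ l, pow_ne_zero _ (neg_ne_zero.2 (sqrt_pos.2 (neg_pos.2 hα)).ne'), fun s => ?_⟩
  rw [hΨ, hρfun, iteratedDeriv_exp_quadratic hα]
  field_simp [exp_ne_zero]
end

section
/- Let α, β be real with −β < α < 0, let ρ(s) = (s+1)^{(α−β)/2−1}(s−1)^{(α+β)/2−1} for s ∈ (1,∞), and for l ∈ ℕ define Ψ_l(s) = (1/ρ(s)) · (d/ds)^l [(s²−1)^l ρ(s)]. Then for every natural number l with l < (1−α)/2 there exists a real polynomial p of degree exactly l such that Ψ_l(s) = p(s) for all s ∈ (1,∞). -/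
/-!
On `(1, ∞)` one has `(s² - 1)^l ρ(s) = (s + 1)^A (s - 1)^B` with `A = a + l`, `B = b + l`, where
`ρ = (s + 1)^a (s - 1)^b`. Leibniz' rule and the power rule turn its `l`-th derivative into
`∑ i, C(l, i) (A)ᵢ (B)ₗ₋ᵢ (s + 1)^(A - i) (s - 1)^(B - l + i)` with falling factorials `(·)ₖ`, so
dividing by `ρ` leaves the polynomial `∑ i, C(l, i) (A)ᵢ (B)ₗ₋ᵢ (s + 1)^(l - i) (s - 1)^i`. Each
summand is a multiple of a monic polynomial of degree `l`, so by Chu–Vandermonde the coefficient of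
`s^l` is `(A + B)ₗ`. Since `A + B = α - 2 + 2l < -1`, every factor of `(A + B)ₗ` is negative,
and the degree is exactly `l`.
-/

open Finset Polynomial

theorem descPochhammer_eval_add (r s : ℝ) (n : ℕ) :
    (descPochhammer ℝ n).eval (r + s) = ∑ i ∈ range (n + 1),
      n.choose i * ((descPochhammer ℝ i).eval r * (descPochhammer ℝ (n - i)).eval s) := by
  -- Mathlib's Chu–Vandermonde is stated for `descPochhammer ℤ` evaluated with `smeval`.
  have h_smeval (k : ℕ) (x : ℝ) : (descPochhammer ℝ k).eval x = (descPochhammer ℤ k).smeval x := by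
    rw [descPochhammer_eval_eq_ascPochhammer, ← ascPochhammer_smeval_eq_eval,
      descPochhammer_smeval_eq_ascPochhammer]
  simp only [h_smeval]
  rw [Ring.descPochhammer_smeval_add n (Commute.all r s),
    Nat.sum_antidiagonal_eq_sum_range_succ (fun i j => (n.choose i : ℝ) *
      ((descPochhammer ℤ i).smeval r * (descPochhammer ℤ j).smeval s))]

theorem descPochhammer_eval_ne_zero_of_neg {r : ℝ} (hr : r < 0) (n : ℕ) :
    (descPochhammer ℝ n).eval r ≠ 0 := by
  rw [descPochhammer_eval_eq_prod_range]
  exact prod_ne_zero_iff.mpr fun j _ => by linarith [(j.cast_nonneg : (0 : ℝ) ≤ j)]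

theorem iteratedDeriv_add_const_rpow (c r x : ℝ) (n : ℕ) :
    iteratedDeriv n (fun t => (t + c) ^ r) x = (descPochhammer ℝ n).eval r * (x + c) ^ (r - n) := by
  rw [iteratedDeriv_comp_add_const (f := fun t : ℝ => t ^ r), iteratedDeriv_eq_iterate]
  exact Real.iter_deriv_rpow_const r (x + c) n

theorem iteratedDeriv_sub_const_rpow (c r x : ℝ) (n : ℕ) :
    iteratedDeriv n (fun t => (t - c) ^ r) x = (descPochhammer ℝ n).eval r * (x - c) ^ (r - n) := by
  rw [iteratedDeriv_comp_sub_const (f := fun t : ℝ => t ^ r), iteratedDeriv_eq_iterate]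
  exact Real.iter_deriv_rpow_const r (x - c) n

theorem iteratedDeriv_add_one_rpow_mul_sub_one_rpow {A B x : ℝ} (hx : 1 < x) (n : ℕ) :
    iteratedDeriv n (fun t => (t + 1) ^ A * (t - 1) ^ B) x = ∑ i ∈ range (n + 1),
      n.choose i * ((descPochhammer ℝ i).eval A * (descPochhammer ℝ (n - i)).eval B) *
        ((x + 1) ^ (A - i) * (x - 1) ^ (B - (n - i : ℕ))) := by
  have h₁ : ContDiffAt ℝ n (fun t => (t + 1) ^ A) x :=
    (Real.contDiffAt_rpow_const (Or.inl (by linarith))).comp x (contDiffAt_id.add contDiffAt_const)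
  have h₂ : ContDiffAt ℝ n (fun t => (t - 1) ^ B) x :=
    (Real.contDiffAt_rpow_const (Or.inl (by linarith))).comp x (contDiffAt_id.sub contDiffAt_const)
  rw [iteratedDeriv_fun_mul h₁ h₂]
  refine sum_congr rfl fun i _ => ?_
  rw [iteratedDeriv_add_const_rpow, iteratedDeriv_sub_const_rpow]
  ring

noncomputable def jacobiRodrigues (A B : ℝ) (n : ℕ) : ℝ[X] :=
  ∑ i ∈ range (n + 1), C (n.choose i * ((descPochhammer ℝ i).eval A *
    (descPochhammer ℝ (n - i)).eval B)) * ((X + 1) ^ (n - i) * (X - 1) ^ i)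

theorem monic_X_add_one_pow_mul_X_sub_one_pow (j k : ℕ) :
    ((X + 1 : ℝ[X]) ^ j * (X - 1) ^ k).Monic :=
  ((monic_X_add_C 1).pow j).mul ((monic_X_sub_C 1).pow k)

theorem natDegree_X_add_one_pow_mul_X_sub_one_pow (j k : ℕ) :
    ((X + 1 : ℝ[X]) ^ j * (X - 1) ^ k).natDegree = j + k := by
  rw [← C_1, ((monic_X_add_C 1).pow j).natDegree_mul ((monic_X_sub_C 1).pow k), natDegree_pow,
    natDegree_pow, natDegree_X_add_C, natDegree_X_sub_C, mul_one, mul_one]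

theorem natDegree_jacobiRodrigues_le (A B : ℝ) (n : ℕ) : (jacobiRodrigues A B n).natDegree ≤ n := by
  refine natDegree_sum_le_of_forall_le _ _ fun i hi => (natDegree_C_mul_le _ _).trans ?_
  rw [natDegree_X_add_one_pow_mul_X_sub_one_pow]
  have := mem_range.mp hi
  omega

theorem coeff_jacobiRodrigues_self (A B : ℝ) (n : ℕ) :
    (jacobiRodrigues A B n).coeff n = (descPochhammer ℝ n).eval (A + B) := by
  rw [jacobiRodrigues, finsetSum_coeff, descPochhammer_eval_add]
  refine sum_congr rfl fun i hi => ?_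
  have hi : n - i + i = n := Nat.sub_add_cancel (Nat.lt_succ_iff.mp (mem_range.mp hi))
  have := (monic_X_add_one_pow_mul_X_sub_one_pow (n - i) i).coeff_natDegree
  rw [natDegree_X_add_one_pow_mul_X_sub_one_pow, hi] at this
  rw [coeff_C_mul, this, mul_one]

theorem degree_jacobiRodrigues {A B : ℝ} {n : ℕ} (h : (descPochhammer ℝ n).eval (A + B) ≠ 0) :
    (jacobiRodrigues A B n).degree = n :=
  degree_eq_of_le_of_coeff_ne_zero (degree_le_of_natDegree_le (natDegree_jacobiRodrigues_le A B n))
    (by rwa [coeff_jacobiRodrigues_self])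

theorem iteratedDeriv_add_one_rpow_mul_sub_one_rpow_eq_mul_eval {a b x : ℝ} (hx : 1 < x) (n : ℕ) :
    iteratedDeriv n (fun t => (t + 1) ^ (a + n) * (t - 1) ^ (b + n)) x =
      (x + 1) ^ a * (x - 1) ^ b * (jacobiRodrigues (a + n) (b + n) n).eval x := by
  rw [iteratedDeriv_add_one_rpow_mul_sub_one_rpow hx, jacobiRodrigues, eval_finsetSum, mul_sum]
  refine sum_congr rfl fun i hi => ?_
  have hi : i ≤ n := Nat.lt_succ_iff.mp (mem_range.mp hi)
  have h₁ : (x + 1) ^ (a + n - i) = (x + 1) ^ a * (x + 1) ^ (n - i) := by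
    rw [← Real.rpow_natCast, Nat.cast_sub hi, ← Real.rpow_add (by linarith), add_sub_assoc]
  have h₂ : (x - 1) ^ (b + n - (n - i : ℕ)) = (x - 1) ^ b * (x - 1) ^ i := by
    rw [Nat.cast_sub hi, show b + n - (n - i : ℝ) = b + i by ring, Real.rpow_add (by linarith),
      Real.rpow_natCast]
  simp only [h₁, h₂, eval_mul, eval_C, eval_pow, eval_add, eval_sub, eval_X, eval_one]
  ring

theorem rodrigues_is_polynomial_of_degree_l_general
    (α β : ℝ)
    (ρ : ℝ → ℝ)
    (hρ : ∀ s : ℝ, s ∈ Set.Ioi (1 : ℝ) →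
      ρ s = (s + 1) ^ ((α - β) / 2 - 1) * (s - 1) ^ ((α + β) / 2 - 1))
    (l : ℕ) (hl : (l : ℝ) < (1 - α) / 2)
    (Ψ : ℝ → ℝ)
    (hΨ : ∀ s : ℝ, s ∈ Set.Ioi (1 : ℝ) →
      Ψ s = (1 / ρ s) * iteratedDeriv l (fun t => (t ^ 2 - 1) ^ l * ρ t) s) :
    ∃ p : Polynomial ℝ, p.degree = l ∧ ∀ s ∈ Set.Ioi (1 : ℝ), Ψ s = p.eval s := by
  set a := (α - β) / 2 - 1 with ha
  set b := (α + β) / 2 - 1 with hb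
  have hρ_pos : ∀ s ∈ Set.Ioi (1 : ℝ), 0 < ρ s := fun s (hs : 1 < s) => by
    rw [hρ s hs]
    exact mul_pos (Real.rpow_pos_of_pos (by linarith) a) (Real.rpow_pos_of_pos (by linarith) b)
  have h_factor : ∀ s ∈ Set.Ioi (1 : ℝ),
      (s ^ 2 - 1) ^ l * ρ s = (s + 1) ^ (a + l) * (s - 1) ^ (b + l) := fun s (hs : 1 < s) => by
    rw [hρ s hs, Real.rpow_add (by linarith), Real.rpow_add (by linarith), Real.rpow_natCast,
      Real.rpow_natCast, show s ^ 2 - 1 = (s + 1) * (s - 1) by ring, mul_pow]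
    ring
  refine ⟨jacobiRodrigues (a + l) (b + l) l,
    degree_jacobiRodrigues (descPochhammer_eval_ne_zero_of_neg (by linarith) l), fun s hs => ?_⟩
  have h_near : (fun t => (t ^ 2 - 1) ^ l * ρ t) =ᶠ[nhds s]
      fun t => (t + 1) ^ (a + l) * (t - 1) ^ (b + l) :=
    Filter.eventuallyEq_of_mem (isOpen_Ioi.mem_nhds hs) h_factor
  rw [hΨ s hs, h_near.iteratedDeriv_eq, iteratedDeriv_add_one_rpow_mul_sub_one_rpow_eq_mul_eval hs,
    ← hρ s hs]
  field_simp [(hρ_pos s hs).ne']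

/-- For `-β < α < 0`, the weight
`ρ(s) = (s+1)^{(α-β)/2-1}(s-1)^{(α+β)/2-1}` on `(1,∞)` (case `σ(s) = s²-1`)
and `Ψ_l(s) = (1/ρ(s)) (d/ds)^l [(s²-1)^l ρ(s)]`, for every `l` with
`l < (1-α)/2` there is a real polynomial `p` of degree exactly `l` with
`Ψ_l = p` on `(1,∞)`. -/
theorem rodrigues_is_polynomial_of_degree_l
    (α β : ℝ) (hαβ : -β < α) (hα : α < 0)
    (ρ : ℝ → ℝ)
    (hρ : ∀ s : ℝ, s ∈ Set.Ioi (1 : ℝ) →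
      ρ s = (s + 1) ^ ((α - β) / 2 - 1) * (s - 1) ^ ((α + β) / 2 - 1))
    (l : ℕ) (hl : (l : ℝ) < (1 - α) / 2)
    (Ψ : ℝ → ℝ)
    (hΨ : ∀ s : ℝ, s ∈ Set.Ioi (1 : ℝ) →
      Ψ s = (1 / ρ s) * iteratedDeriv l (fun t => (t ^ 2 - 1) ^ l * ρ t) s) :
    ∃ p : Polynomial ℝ, p.degree = l ∧ ∀ s ∈ Set.Ioi (1 : ℝ), Ψ s = p.eval s :=
  rodrigues_is_polynomial_of_degree_l_general α β ρ hρ l hl Ψ hΨ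
end

section
/- Let α < 0, β ∈ ℝ, let ρ(s) = (1+s²)^{α/2−1} e^{β·arctan s} for s ∈ ℝ, and for l ∈ ℕ define Ψ_l(s) = (1/ρ(s)) · (d/ds)^l [(s²+1)^l ρ(s)]. Then for all natural numbers l ≠ l' with l < (1−α)/2 and l' < (1−α)/2, the function s ↦ Ψ_l(s) Ψ_{l'}(s) ρ(s) is integrable on ℝ and ∫_{−∞}^{∞} Ψ_l(s) Ψ_{l'}(s) ρ(s) ds = 0; that is, {Ψ_l : l < (1−α)/2} is a finite system of polynomials orthogonal with weight ρ on (−∞,∞). -/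
open MeasureTheory Polynomial Filter Topology

/-!
With the Romanovski weight `w_γ(s) = (1 + s²)^γ e^{β arctan s}` one has
`w_γ' = (2γs + β) w_{γ-1}`, so by induction the `k`-th derivative of `w_γ` is a polynomial of
degree `≤ k` times `w_{γ-k}`. Since `ρ = w_γ` for `γ = α/2 - 1` and `σ^l ρ = w_{γ+l}`, each `Ψ_l`
is a polynomial of degree `≤ l`.

For `l' < l`, integrate `∫ Ψ_{l'} w_{γ+l}^{(l)}` by parts `l` times; after the last step the
polynomial factor has been differentiated more often than its degree, so the integral is `0`.
A polynomial of degree `d` times `w_δ` is `O(|s|^{d+2δ})`, and `l + l' < 1 - α` keeps this exponent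
below `-1` for every integrand and below `0` for every boundary term along the way.
-/

namespace Polynomial

theorem natDegree_derivative_add_one_le {R : Type*} [Semiring R] {p : R[X]}
    (hp : derivative p ≠ 0) : (derivative p).natDegree + 1 ≤ p.natDegree :=
  natDegree_derivative_lt (mt derivative_of_natDegree_zero hp)

theorem exists_abs_eval_le_mul_one_add_sq_rpow {P : ℝ[X]} {n : ℕ} (hP : P.natDegree ≤ n) :
    ∃ C, ∀ s : ℝ, |P.eval s| ≤ C * (1 + s ^ 2) ^ ((n : ℝ) / 2) := by
  refine ⟨∑ i ∈ Finset.range (n + 1), |P.coeff i|, fun s => ?_⟩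
  have hsqrt : (1 + s ^ 2) ^ ((n : ℝ) / 2) = √(1 + s ^ 2) ^ n := by
    rw [Real.sqrt_eq_rpow, ← Real.rpow_mul_natCast (by positivity)]
    ring_nf
  have hpow : ∀ i ∈ Finset.range (n + 1), |s| ^ i ≤ √(1 + s ^ 2) ^ n := fun i hi =>
    calc |s| ^ i ≤ √(1 + s ^ 2) ^ i :=
          pow_le_pow_left₀ (abs_nonneg s) (Real.abs_le_sqrt (by linarith)) i
      _ ≤ √(1 + s ^ 2) ^ n :=
          pow_le_pow_right₀ (Real.one_le_sqrt.2 (by nlinarith))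
            (Nat.lt_succ_iff.1 (Finset.mem_range.1 hi))
  rw [hsqrt, eval_eq_sum_range' (Nat.lt_succ_of_le hP), Finset.sum_mul]
  refine (Finset.abs_sum_le_sum_abs _ _).trans (Finset.sum_le_sum fun i hi => ?_)
  rw [abs_mul, abs_pow]
  exact mul_le_mul_of_nonneg_left (hpow i hi) (abs_nonneg _)

end Polynomial

namespace Romanovski

noncomputable def weight (β γ s : ℝ) : ℝ :=
  (1 + s ^ 2) ^ γ * Real.exp (β * Real.arctan s)

theorem weight_pos (β γ s : ℝ) : 0 < weight β γ s := by
  unfold weight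
  positivity

theorem weight_add (β γ δ s : ℝ) :
    weight β (γ + δ) s = (1 + s ^ 2) ^ δ * weight β γ s := by
  rw [weight, weight, Real.rpow_add (by positivity)]
  ring

theorem weight_le (β γ s : ℝ) :
    weight β γ s ≤ Real.exp (|β| * (Real.pi / 2)) * (1 + s ^ 2) ^ γ := by
  have harctan : |Real.arctan s| ≤ Real.pi / 2 :=
    abs_le.2 ⟨(Real.neg_pi_div_two_lt_arctan s).le, (Real.arctan_lt_pi_div_two s).le⟩
  have hexp : β * Real.arctan s ≤ |β| * (Real.pi / 2) :=
    calc β * Real.arctan s ≤ |β| * |Real.arctan s| := by rw [← abs_mul]; exact le_abs_self _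
      _ ≤ |β| * (Real.pi / 2) := mul_le_mul_of_nonneg_left harctan (abs_nonneg β)
  rw [weight, mul_comm]
  gcongr

theorem continuous_weight (β γ : ℝ) : Continuous (weight β γ) :=
  ((continuous_const.add (continuous_pow 2)).rpow_const fun s =>
    Or.inl (by positivity : (0 : ℝ) < 1 + s ^ 2).ne').mul (by fun_prop)

theorem hasDerivAt_weight (β γ s : ℝ) :
    HasDerivAt (weight β γ) ((2 * γ * s + β) * weight β (γ - 1) s) s := by
  have hbase : HasDerivAt (fun s : ℝ => 1 + s ^ 2) (2 * s) s := by
    simpa using (hasDerivAt_pow 2 s).const_add 1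
  have h := (hbase.rpow_const (p := γ) (Or.inl (by positivity))).mul
    ((Real.hasDerivAt_arctan s).const_mul β).exp
  refine h.congr_deriv ?_
  have hpos : (0 : ℝ) < 1 + s ^ 2 := by positivity
  rw [weight, Real.rpow_sub hpos, Real.rpow_one]
  field_simp

noncomputable def weightedDeriv (β γ : ℝ) (P : ℝ[X]) : ℝ[X] :=
  derivative P * (X ^ 2 + 1) + P * (C (2 * γ) * X + C β)

theorem hasDerivAt_eval_mul_weight (β γ : ℝ) (P : ℝ[X]) (s : ℝ) :
    HasDerivAt (fun t => P.eval t * weight β γ t)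
      ((weightedDeriv β γ P).eval s * weight β (γ - 1) s) s := by
  refine ((P.hasDerivAt s).mul (hasDerivAt_weight β γ s)).congr_deriv ?_
  have h := weight_add β (γ - 1) 1 s
  rw [sub_add_cancel, Real.rpow_one] at h
  rw [h]
  simp only [weightedDeriv, eval_add, eval_mul, eval_pow, eval_X, eval_one, eval_C]
  ring

theorem natDegree_weightedDeriv_le (β γ : ℝ) {P : ℝ[X]} {n : ℕ} (hP : P.natDegree ≤ n) :
    (weightedDeriv β γ P).natDegree ≤ n + 1 := by
  have hquad : (X ^ 2 + 1 : ℝ[X]).natDegree ≤ 2 := by compute_degree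
  have hlin : (C (2 * γ) * X + C β : ℝ[X]).natDegree ≤ 1 := by compute_degree
  refine natDegree_add_le_of_degree_le ?_ (natDegree_mul_le_of_le hP hlin)
  rcases eq_or_ne (derivative P) 0 with hP' | hP'
  · simp [hP']
  · have := natDegree_derivative_add_one_le hP'
    exact (natDegree_mul_le_of_le le_rfl hquad).trans (by omega)

noncomputable def iteratedDerivFactor (β γ : ℝ) : ℕ → ℝ[X]
  | 0 => 1
  | k + 1 => weightedDeriv β (γ - k) (iteratedDerivFactor β γ k)

theorem natDegree_iteratedDerivFactor_le (β γ : ℝ) (k : ℕ) :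
    (iteratedDerivFactor β γ k).natDegree ≤ k := by
  induction k with
  | zero => simp [iteratedDerivFactor]
  | succ k ih => exact natDegree_weightedDeriv_le _ _ ih

theorem iteratedDeriv_weight (β γ : ℝ) (k : ℕ) :
    iteratedDeriv k (weight β γ) =
      fun s => (iteratedDerivFactor β γ k).eval s * weight β (γ - k) s := by
  induction k with
  | zero => simp [iteratedDerivFactor]
  | succ k ih =>
    ext s
    rw [iteratedDeriv_succ, ih, (hasDerivAt_eval_mul_weight β (γ - k) _ s).deriv]
    push_cast
    rw [sub_sub]
    rfl

theorem hasDerivAt_iteratedDeriv_weight (β γ : ℝ) (m : ℕ) (s : ℝ) :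
    HasDerivAt (iteratedDeriv m (weight β γ)) (iteratedDeriv (m + 1) (weight β γ) s) s := by
  rw [iteratedDeriv_succ]
  refine DifferentiableAt.hasDerivAt ?_
  rw [iteratedDeriv_weight]
  exact (hasDerivAt_eval_mul_weight β _ _ s).differentiableAt

theorem exists_abs_eval_mul_weight_le (β δ : ℝ) {P : ℝ[X]} {n : ℕ} (hP : P.natDegree ≤ n) :
    ∃ C, ∀ s, |P.eval s * weight β δ s| ≤ C * (1 + s ^ 2) ^ ((n : ℝ) / 2 + δ) := by
  obtain ⟨C, hC⟩ := exists_abs_eval_le_mul_one_add_sq_rpow hP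
  refine ⟨C * Real.exp (|β| * (Real.pi / 2)), fun s => ?_⟩
  rw [abs_mul, abs_of_pos (weight_pos β δ s), Real.rpow_add (by positivity)]
  calc |P.eval s| * weight β δ s
      ≤ (C * (1 + s ^ 2) ^ ((n : ℝ) / 2)) *
          (Real.exp (|β| * (Real.pi / 2)) * (1 + s ^ 2) ^ δ) :=
        mul_le_mul (hC s) (weight_le β δ s) (weight_pos β δ s).le ((abs_nonneg _).trans (hC s))
    _ = _ := by ring

theorem integrable_eval_mul_weight (β δ : ℝ) {P : ℝ[X]} {n : ℕ} (hP : P.natDegree ≤ n)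
    (h : (n : ℝ) + 2 * δ < -1) : Integrable fun s => P.eval s * weight β δ s := by
  obtain ⟨C, hC⟩ := exists_abs_eval_mul_weight_le β δ hP
  have hdom : Integrable fun s : ℝ => (1 + ‖s‖ ^ 2) ^ (-(-(n + 2 * δ)) / 2) :=
    integrable_rpow_neg_one_add_norm_sq (by rw [Module.finrank_self]; push_cast; linarith)
  refine (hdom.const_mul C).mono' (P.continuous.mul (continuous_weight β δ)).aestronglyMeasurable
    (Eventually.of_forall fun s => ?_)
  rw [Real.norm_eq_abs, Real.norm_eq_abs, sq_abs, neg_neg, add_div,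
    mul_div_cancel_left₀ δ two_ne_zero]
  exact hC s

theorem tendsto_one_add_sq_cocompact : Tendsto (fun s : ℝ => 1 + s ^ 2) (cocompact ℝ) atTop := by
  refine tendsto_atTop_add_const_left _ _ ?_
  simpa only [Function.comp_def, Real.norm_eq_abs, sq_abs] using
    (tendsto_pow_atTop two_ne_zero).comp (tendsto_norm_cocompact_atTop (E := ℝ))

theorem tendsto_eval_mul_weight_cocompact (β δ : ℝ) {P : ℝ[X]} {n : ℕ} (hP : P.natDegree ≤ n)
    (h : (n : ℝ) + 2 * δ < 0) :
    Tendsto (fun s => P.eval s * weight β δ s) (cocompact ℝ) (𝓝 0) := by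
  obtain ⟨C, hC⟩ := exists_abs_eval_mul_weight_le β δ hP
  have hdecay : Tendsto (fun s : ℝ => (1 + s ^ 2) ^ ((n : ℝ) / 2 + δ)) (cocompact ℝ) (𝓝 0) := by
    simpa only [Function.comp_def, neg_neg] using
      (tendsto_rpow_neg_atTop (y := -((n : ℝ) / 2 + δ)) (by linarith)).comp
        tendsto_one_add_sq_cocompact
  refine squeeze_zero_norm (fun s => (Real.norm_eq_abs _).trans_le (hC s)) ?_
  simpa using hdecay.const_mul C

theorem eval_mul_iteratedDeriv_weight (β δ : ℝ) (R : ℝ[X]) (m : ℕ) :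
    (fun s => R.eval s * iteratedDeriv m (weight β δ) s) =
      fun s => (R * iteratedDerivFactor β δ m).eval s * weight β (δ - m) s := by
  ext s
  rw [iteratedDeriv_weight, eval_mul, mul_assoc]

theorem integrable_eval_mul_iteratedDeriv_weight (β δ : ℝ) (R : ℝ[X]) (m : ℕ)
    (h : (R.natDegree : ℝ) + 2 * δ < m - 1) :
    Integrable fun s => R.eval s * iteratedDeriv m (weight β δ) s := by
  rw [eval_mul_iteratedDeriv_weight]
  refine integrable_eval_mul_weight β _
    (natDegree_mul_le_of_le le_rfl (natDegree_iteratedDerivFactor_le β δ m)) ?_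
  push_cast
  linarith

theorem tendsto_eval_mul_iteratedDeriv_weight_cocompact (β δ : ℝ) (R : ℝ[X]) (m : ℕ)
    (h : (R.natDegree : ℝ) + 2 * δ < m) :
    Tendsto (fun s => R.eval s * iteratedDeriv m (weight β δ) s) (cocompact ℝ) (𝓝 0) := by
  rw [eval_mul_iteratedDeriv_weight]
  refine tendsto_eval_mul_weight_cocompact β _
    (natDegree_mul_le_of_le le_rfl (natDegree_iteratedDerivFactor_le β δ m)) ?_
  push_cast
  linarith

theorem integral_eval_mul_iteratedDeriv_weight_succ (β δ : ℝ) (R : ℝ[X]) (m : ℕ)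
    (h : (R.natDegree : ℝ) + 2 * δ < m) :
    ∫ s, R.eval s * iteratedDeriv (m + 1) (weight β δ) s =
      -∫ s, (derivative R).eval s * iteratedDeriv m (weight β δ) s := by
  have hR' : Integrable fun s => (derivative R).eval s * iteratedDeriv m (weight β δ) s := by
    rcases eq_or_ne (derivative R) 0 with h0 | h0
    · simp [h0]
    · refine integrable_eval_mul_iteratedDeriv_weight β δ _ m ?_
      have : ((derivative R).natDegree : ℝ) + 1 ≤ R.natDegree := by
        exact_mod_cast natDegree_derivative_add_one_le h0
      linarith
  have hlim := tendsto_eval_mul_iteratedDeriv_weight_cocompact β δ R m h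
  rw [integral_mul_deriv_eq_deriv_mul (fun s _ => R.hasDerivAt s)
    (fun s _ => hasDerivAt_iteratedDeriv_weight β δ m s)
    (integrable_eval_mul_iteratedDeriv_weight β δ R (m + 1) (by push_cast; linarith)) hR'
    (hlim.mono_left atBot_le_cocompact) (hlim.mono_left atTop_le_cocompact), sub_self, zero_sub]

theorem integral_eval_mul_iteratedDeriv_weight_eq_zero (β δ : ℝ) {R : ℝ[X]} {m : ℕ}
    (hdeg : R.natDegree < m) (h : (R.natDegree : ℝ) + 2 * δ < m - 1) :
    ∫ s, R.eval s * iteratedDeriv m (weight β δ) s = 0 := by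
  induction m generalizing R with
  | zero => exact absurd hdeg (Nat.not_lt_zero _)
  | succ m ih =>
    push_cast at h
    rw [integral_eval_mul_iteratedDeriv_weight_succ β δ R m (by linarith), neg_eq_zero]
    rcases eq_or_ne (derivative R) 0 with h0 | h0
    · simp [h0]
    · have hlt := natDegree_derivative_add_one_le h0
      have hlt' : ((derivative R).natDegree : ℝ) + 1 ≤ R.natDegree := by exact_mod_cast hlt
      exact ih (by omega) (by linarith)

noncomputable def rodriguesPoly (β γ : ℝ) (l : ℕ) : ℝ[X] :=
  iteratedDerivFactor β (γ + l) l

theorem natDegree_rodriguesPoly_le (β γ : ℝ) (l : ℕ) : (rodriguesPoly β γ l).natDegree ≤ l :=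
  natDegree_iteratedDerivFactor_le β _ l

theorem iteratedDeriv_weight_add_natCast (β γ : ℝ) (l : ℕ) :
    iteratedDeriv l (weight β (γ + l)) = fun s => (rodriguesPoly β γ l).eval s * weight β γ s := by
  rw [iteratedDeriv_weight, add_sub_cancel_right]
  rfl

theorem rodrigues_formula (β γ : ℝ) (l : ℕ) (s : ℝ) :
    1 / weight β γ s * iteratedDeriv l (fun t => (t ^ 2 + 1) ^ l * weight β γ t) s =
      (rodriguesPoly β γ l).eval s := by
  have hσ : (fun t => (t ^ 2 + 1) ^ l * weight β γ t) = weight β (γ + l) := by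
    ext t
    rw [weight_add, Real.rpow_natCast, add_comm (t ^ 2)]
  rw [hσ, iteratedDeriv_weight_add_natCast]
  field_simp [(weight_pos β γ s).ne']

theorem integrable_eval_rodriguesPoly_mul_weight (β γ : ℝ) {a b : ℕ}
    (h : (a : ℝ) + b + 2 * γ < -1) :
    Integrable fun s =>
      (rodriguesPoly β γ a).eval s * (rodriguesPoly β γ b).eval s * weight β γ s := by
  simpa only [eval_mul] using integrable_eval_mul_weight β γ
    (natDegree_mul_le_of_le (natDegree_rodriguesPoly_le β γ a) (natDegree_rodriguesPoly_le β γ b))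
    (by push_cast; exact h)

theorem integral_eval_rodriguesPoly_mul_weight_eq_zero (β γ : ℝ) {a b : ℕ} (hab : a ≠ b)
    (h : (a : ℝ) + b + 2 * γ < -1) :
    ∫ s, (rodriguesPoly β γ a).eval s * (rodriguesPoly β γ b).eval s * weight β γ s = 0 := by
  wlog hlt : b < a generalizing a b
  · simp_rw [mul_comm ((rodriguesPoly β γ a).eval _)]
    exact this hab.symm (by linarith) (by omega)
  have hdeg : ((rodriguesPoly β γ b).natDegree : ℝ) ≤ b := by
    exact_mod_cast natDegree_rodriguesPoly_le β γ b
  have := integral_eval_mul_iteratedDeriv_weight_eq_zero β (γ + a)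
    ((natDegree_rodriguesPoly_le β γ b).trans_lt hlt) (by linarith)
  rw [iteratedDeriv_weight_add_natCast] at this
  rw [← this]
  congr 1
  ext s
  ring

end Romanovski

open Romanovski

theorem orthogonality_finite_system_sigma_s_sq_plus_one_general
    (α β : ℝ)
    (ρ : ℝ → ℝ)
    (hρ : ∀ s : ℝ, ρ s = (1 + s ^ 2) ^ (α / 2 - 1) * Real.exp (β * Real.arctan s))
    (Ψ : ℕ → ℝ → ℝ)
    (hΨ : ∀ (l : ℕ) (s : ℝ),
      Ψ l s = (1 / ρ s) * iteratedDeriv l (fun t => (t ^ 2 + 1) ^ l * ρ t) s)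
    (l l' : ℕ) (hne : l ≠ l')
    (hl : (l : ℝ) < (1 - α) / 2) (hl' : (l' : ℝ) < (1 - α) / 2) :
    Integrable (fun s => Ψ l s * Ψ l' s * ρ s) ∧
      ∫ s : ℝ, Ψ l s * Ψ l' s * ρ s = 0 := by
  have hρ_eq : ρ = weight β (α / 2 - 1) := funext hρ
  have hΨ_eq : Ψ = fun k => (rodriguesPoly β (α / 2 - 1) k).eval := by
    ext k s
    rw [hΨ, hρ_eq, rodrigues_formula]
  have h : (l : ℝ) + l' + 2 * (α / 2 - 1) < -1 := by linarith
  rw [hρ_eq, hΨ_eq]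
  exact ⟨integrable_eval_rodriguesPoly_mul_weight β _ h,
    integral_eval_rodriguesPoly_mul_weight_eq_zero β _ hne h⟩

/-- For `α < 0`, `β ∈ ℝ`, the weight
`ρ(s) = (1+s²)^{α/2-1} e^{β arctan s}` on `(-∞,∞)` (case `σ(s) = s²+1`)
and `Ψ_l(s) = (1/ρ(s)) (d/ds)^l [(s²+1)^l ρ(s)]`, for all `l ≠ l'` with
`l < (1-α)/2` and `l' < (1-α)/2` the function `s ↦ Ψ_l(s)Ψ_{l'}(s)ρ(s)` is
integrable on ℝ with integral zero: the `Ψ_l`, `l < (1-α)/2`, form a finite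
system of orthogonal polynomials with weight `ρ`. -/
theorem orthogonality_finite_system_sigma_s_sq_plus_one
    (α β : ℝ) (hα : α < 0)
    (ρ : ℝ → ℝ)
    (hρ : ∀ s : ℝ, ρ s = (1 + s ^ 2) ^ (α / 2 - 1) * Real.exp (β * Real.arctan s))
    (Ψ : ℕ → ℝ → ℝ)
    (hΨ : ∀ (l : ℕ) (s : ℝ),
      Ψ l s = (1 / ρ s) * iteratedDeriv l (fun t => (t ^ 2 + 1) ^ l * ρ t) s)
    (l l' : ℕ) (hne : l ≠ l')
    (hl : (l : ℝ) < (1 - α) / 2) (hl' : (l' : ℝ) < (1 - α) / 2) :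
    Integrable (fun s => Ψ l s * Ψ l' s * ρ s) ∧
      ∫ s : ℝ, Ψ l s * Ψ l' s * ρ s = 0 :=
  orthogonality_finite_system_sigma_s_sq_plus_one_general α β ρ hρ Ψ hΨ l l' hne hl hl'
end

section
/- Let α < 0 and β > 0, let ρ(s) = s^{α−2} e^{−β/s} for s ∈ (0,∞), and for l ∈ ℕ define Ψ_l(s) = (1/ρ(s)) · (d/ds)^l [s^{2l} ρ(s)]. Then for every natural number l with l < (1−α)/2, the function s ↦ Ψ_l(s)² ρ(s) is integrable on (0,∞); that is, Ψ_l(s)√ρ(s) is square integrable on (0,∞). -/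
/-!
By induction, the `n`-th derivative of `t ^ m * exp (-β / t)` on `(0, ∞)` is
`t ^ (m - 2n) * q_n(t) * exp (-β / t)` for a polynomial `q_n` of degree at most `n`; with
`m = 2l + α - 2` this makes `Ψ_l` a polynomial of degree at most `l`. So `Ψ_l² ρ` is a linear
combination of functions `s ^ γ * exp (-β / s)` with `γ ≤ 2l + α - 2 < -1`, and the substitution
`s ↦ 1 / s` turns each of them into the integrand of a convergent Gamma integral.
-/

open MeasureTheory Set Polynomial Real

/-- The recursion is read off from differentiating
`t ^ (m - 2n) * (rodriguesPoly m β n).eval t * exp (-β / t)`. -/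
noncomputable def rodriguesPoly (m β : ℝ) : ℕ → ℝ[X]
  | 0 => 1
  | n + 1 => C (m - 2 * n) * X * rodriguesPoly m β n + X ^ 2 * derivative (rodriguesPoly m β n)
      + C β * rodriguesPoly m β n

lemma natDegree_rodriguesPoly_le (m β : ℝ) (n : ℕ) : (rodriguesPoly m β n).natDegree ≤ n := by
  induction n with
  | zero => simp [rodriguesPoly]
  | succ n ih =>
    rw [rodriguesPoly]
    set q := rodriguesPoly m β n
    refine natDegree_add_le_of_degree_le (natDegree_add_le_of_degree_le ?_ ?_) ?_
    · have hCX : (C (m - 2 * n) * X).natDegree ≤ 1 := (natDegree_C_mul_le _ _).trans natDegree_X_le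
      have := natDegree_mul_le (p := C (m - 2 * n) * X) (q := q)
      omega
    · by_cases hq : q.natDegree = 0
      · simp [derivative_of_natDegree_zero hq]
      · have := natDegree_derivative_lt hq
        have := natDegree_mul_le (p := (X : ℝ[X]) ^ 2) (q := derivative q)
        have := natDegree_X_pow_le (R := ℝ) 2
        omega
    · exact (natDegree_C_mul_le _ _).trans (ih.trans n.le_succ)

lemma hasDerivAt_rpow_mul_eval_rodriguesPoly_mul_exp (m β : ℝ) (n : ℕ) {s : ℝ} (hs : 0 < s) :
    HasDerivAt (fun t => t ^ (m - 2 * n) * (rodriguesPoly m β n).eval t * exp (-β / t))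
      (s ^ (m - 2 * (n + 1 : ℕ)) * (rodriguesPoly m β (n + 1)).eval s * exp (-β / s)) s := by
  set q := rodriguesPoly m β n
  have hexp : HasDerivAt (fun t => exp (-β / t)) (exp (-β / s) * (β / s ^ 2)) s := by
    have := ((hasDerivAt_inv hs.ne').const_mul (-β)).exp
    simp only [← div_eq_mul_inv] at this
    convert this using 1
    field_simp
  refine (((hasDerivAt_rpow_const (p := m - 2 * n) (Or.inl hs.ne')).fun_mul
    (q.hasDerivAt s)).fun_mul hexp).congr_deriv ?_
  have hpow : s ^ (m - 2 * n) = s ^ (m - 2 * (n + 1 : ℕ)) * s ^ 2 := by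
    rw [← rpow_natCast s 2, ← rpow_add hs]; push_cast; ring_nf
  have hpow' : s ^ (m - 2 * n - 1) = s ^ (m - 2 * (n + 1 : ℕ)) * s := by
    rw [← rpow_add_one hs.ne']; push_cast; ring_nf
  simp only [rodriguesPoly, eval_add, eval_mul, eval_C, eval_X, eval_pow, hpow, hpow']
  field_simp
  ring

lemma iteratedDeriv_rpow_mul_exp_neg_div (m β : ℝ) (n : ℕ) :
    EqOn (iteratedDeriv n fun t => t ^ m * exp (-β / t))
      (fun t => t ^ (m - 2 * n) * (rodriguesPoly m β n).eval t * exp (-β / t)) (Ioi 0) := by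
  induction n with
  | zero => intro s _; simp [rodriguesPoly]
  | succ n ih =>
    intro s hs
    rw [iteratedDeriv_succ, (ih.eventuallyEq_of_mem (isOpen_Ioi.mem_nhds hs)).deriv_eq]
    exact (hasDerivAt_rpow_mul_eval_rodriguesPoly_mul_exp m β n hs).deriv

lemma integrableOn_rpow_mul_exp_neg_div {β γ : ℝ} (hβ : 0 < β) (hγ : γ < -1) :
    IntegrableOn (fun s : ℝ => s ^ γ * exp (-β / s)) (Ioi 0) := by
  have h := (integrableOn_Ioi_comp_rpow_iff' _ (by norm_num : (-1 : ℝ) ≠ 0)).mpr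
    (integrableOn_rpow_mul_exp_neg_mul_rpow (s := -γ - 2) (by linarith) one_pos hβ)
  refine h.congr_fun (fun s hs => ?_) measurableSet_Ioi
  have hs : 0 < s := hs
  dsimp only
  rw [smul_eq_mul, rpow_one, ← rpow_mul hs.le, rpow_neg_one, ← mul_assoc, ← rpow_add hs]
  congr 2
  ring

lemma integrableOn_eval_mul_rpow_mul_exp_neg_div {β γ : ℝ} (hβ : 0 < β) (p : ℝ[X])
    (hp : p.natDegree + γ < -1) :
    IntegrableOn (fun s : ℝ => p.eval s * (s ^ γ * exp (-β / s))) (Ioi 0) := by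
  have h : IntegrableOn (fun s : ℝ => ∑ i ∈ Finset.range (p.natDegree + 1),
      p.coeff i * (s ^ ((i : ℝ) + γ) * exp (-β / s))) (Ioi 0) := by
    refine integrable_finsetSum _ fun i hi => (integrableOn_rpow_mul_exp_neg_div hβ ?_).const_mul _
    have : (i : ℝ) ≤ p.natDegree := by exact_mod_cast Nat.lt_succ_iff.mp (Finset.mem_range.mp hi)
    linarith
  refine h.congr_fun (fun s hs => ?_) measurableSet_Ioi
  rw [eval_eq_sum_range, Finset.sum_mul]
  refine Finset.sum_congr rfl fun i _ => ?_
  rw [rpow_add hs, rpow_natCast]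
  ring

theorem square_integrability_sigma_s_sq_general
    (α β : ℝ) (hβ : 0 < β)
    (ρ : ℝ → ℝ)
    (hρ : ∀ s : ℝ, s ∈ Set.Ioi (0 : ℝ) → ρ s = s ^ (α - 2) * Real.exp (-β / s))
    (l : ℕ) (hl : (l : ℝ) < (1 - α) / 2)
    (Ψ : ℝ → ℝ)
    (hΨ : ∀ s : ℝ, s ∈ Set.Ioi (0 : ℝ) →
      Ψ s = (1 / ρ s) * iteratedDeriv l (fun t => t ^ (2 * l) * ρ t) s) :
    IntegrableOn (fun s => Ψ s ^ 2 * ρ s) (Set.Ioi (0 : ℝ)) := by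
  set q := rodriguesPoly (2 * l + α - 2) β l
  have hΨq : EqOn Ψ q.eval (Ioi 0) := by
    intro s hs
    have hρ_eq : (fun t => t ^ (2 * l) * ρ t) =ᶠ[nhds s]
        fun t => t ^ (2 * l + α - 2) * exp (-β / t) := by
      filter_upwards [isOpen_Ioi.mem_nhds hs] with t ht
      rw [hρ t ht, ← mul_assoc, ← rpow_natCast, ← rpow_add ht]
      push_cast; ring_nf
    rw [hΨ s hs, hρ_eq.iteratedDeriv_eq, iteratedDeriv_rpow_mul_exp_neg_div _ _ _ hs, hρ s hs,
      show (2 * l + α - 2 : ℝ) - 2 * l = α - 2 by ring]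
    have : 0 < s ^ (α - 2) := rpow_pos_of_pos hs _
    field_simp
    rfl
  have hdeg : ((q ^ 2).natDegree : ℝ) + (α - 2) < -1 := by
    have : (q ^ 2).natDegree ≤ 2 * l :=
      natDegree_pow_le.trans (Nat.mul_le_mul_left 2 (natDegree_rodriguesPoly_le _ _ _))
    have : ((q ^ 2).natDegree : ℝ) ≤ 2 * l := by exact_mod_cast this
    linarith
  refine (integrableOn_eval_mul_rpow_mul_exp_neg_div hβ (q ^ 2) hdeg).congr_fun
    (fun s hs => ?_) measurableSet_Ioi
  dsimp only
  rw [eval_pow, hΨq hs, hρ s hs]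

/-- For `α < 0`, `β > 0`, the weight `ρ(s) = s^{α-2} e^{-β/s}`
on `(0,∞)` (case `σ(s) = s²`) and
`Ψ_l(s) = (1/ρ(s)) (d/ds)^l [s^{2l} ρ(s)]`, for every `l < (1-α)/2` the
function `s ↦ Ψ_l(s)² ρ(s)` is integrable on `(0,∞)`; that is,
`Ψ_l √ρ` is square integrable on `(0,∞)`. -/
theorem square_integrability_sigma_s_sq
    (α β : ℝ) (hα : α < 0) (hβ : 0 < β)
    (ρ : ℝ → ℝ)
    (hρ : ∀ s : ℝ, s ∈ Set.Ioi (0 : ℝ) → ρ s = s ^ (α - 2) * Real.exp (-β / s))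
    (l : ℕ) (hl : (l : ℝ) < (1 - α) / 2)
    (Ψ : ℝ → ℝ)
    (hΨ : ∀ s : ℝ, s ∈ Set.Ioi (0 : ℝ) →
      Ψ s = (1 / ρ s) * iteratedDeriv l (fun t => t ^ (2 * l) * ρ t) s) :
    IntegrableOn (fun s => Ψ s ^ 2 * ρ s) (Set.Ioi (0 : ℝ)) :=
  square_integrability_sigma_s_sq_general α β hβ ρ hρ l hl Ψ hΨ
end

section
/- Let α < 0, β ∈ ℝ, let ρ(s) = (1+s²)^{α/2−1} e^{β·arctan s} for s ∈ ℝ, and for l ∈ ℕ define Ψ_l(s) = (1/ρ(s)) · (d/ds)^l [(s²+1)^l ρ(s)]. Then for every natural number l with l < (1−α)/2, the real polynomial p of degree l satisfying Ψ_l(s) = p(s) for all s ∈ ℝ has exactly l distinct real roots, each of multiplicity one; that is, the zeros of Ψ_l are simple and lie in the interval (−∞,∞). -/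
open Filter Set Real Polynomial

lemma aux_interior_max {f : ℝ → ℝ} (hf : Differentiable ℝ f) {a b y : ℝ}
    (hay : a < y) (hyb : y < b) (ha : f a < f y) (hb : f b < f y) :
    ∃ c, a < c ∧ c < b ∧ deriv f c = 0 := by
  obtain ⟨c, hc, hmax⟩ := (isCompact_Icc (a := a) (b := b)).exists_isMaxOn
    (Set.nonempty_Icc.2 (by linarith)) (hf.continuous.continuousOn)
  have hyc : f y ≤ f c := hmax (Set.mem_Icc.2 ⟨by linarith, by linarith⟩)
  have hca : c ≠ a := by rintro rfl; linarith
  have hcb : c ≠ b := by rintro rfl; linarith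
  have hcint : c ∈ Set.Ioo a b := ⟨lt_of_le_of_ne hc.1 (Ne.symm hca), lt_of_le_of_ne hc.2 hcb⟩
  refine ⟨c, hcint.1, hcint.2, ?_⟩
  exact (hmax.isLocalMax (Icc_mem_nhds hcint.1 hcint.2)).deriv_eq_zero

/-- interior extremum (max or min) from |f y| > |f a|, |f b| -/
lemma aux_interior_extr {f : ℝ → ℝ} (hf : Differentiable ℝ f) {a b y : ℝ}
    (hay : a < y) (hyb : y < b) (ha : |f a| < |f y|) (hb : |f b| < |f y|) :
    ∃ c, a < c ∧ c < b ∧ deriv f c = 0 := by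
  rcases lt_trichotomy (f y) 0 with hy | hy | hy
  · have h1 : (fun x => -f x) a < (fun x => -f x) y := by
      have := neg_le_abs (f a); have := abs_of_neg hy; simp only; linarith
    have h2 : (fun x => -f x) b < (fun x => -f x) y := by
      have := neg_le_abs (f b); have := abs_of_neg hy; simp only; linarith
    obtain ⟨c, hc1, hc2, hc3⟩ := aux_interior_max (f := fun x => -f x) hf.neg hay hyb h1 h2
    refine ⟨c, hc1, hc2, ?_⟩
    have : deriv (fun x => -f x) c = -deriv f c := deriv.neg
    rw [this] at hc3; linarith
  · rw [hy, abs_zero] at ha; have : (0:ℝ) ≤ |f a| := abs_nonneg _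
    linarith
  · refine aux_interior_max hf hay hyb ?_ ?_
    · have := le_abs_self (f a); have := abs_of_pos hy; linarith
    · have := le_abs_self (f b); have := abs_of_pos hy; linarith

/-- zero of deriv to the left of a zero of f, given decay at -∞ -/
lemma aux_left {f : ℝ → ℝ} (hf : Differentiable ℝ f)
    (hbot : Tendsto f atBot (nhds 0)) {x : ℝ} (hx : f x = 0) :
    ∃ c, c < x ∧ deriv f c = 0 := by
  by_cases hzero : ∀ y < x, f y = 0
  · refine ⟨x - 1, by linarith, ?_⟩
    have hev : f =ᶠ[nhds (x-1)] (fun _ => (0:ℝ)) := by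
      filter_upwards [Ioo_mem_nhds (show x - 2 < x - 1 by linarith) (show x - 1 < x by linarith)]
        with y hy
      exact hzero y hy.2
    rw [hev.deriv_eq]; simp
  · push_neg at hzero
    obtain ⟨y, hyx, hy⟩ := hzero
    have habs : 0 < |f y| := abs_pos.2 hy
    have habs' : Tendsto (fun z => |f z|) atBot (nhds 0) := by
      simpa using hbot.abs
    have hev : ∀ᶠ z in atBot, |f z| < |f y| := habs'.eventually_lt_const habs
    obtain ⟨a, ha, hay⟩ := (hev.and (eventually_lt_atBot y)).exists
    obtain ⟨c, hc1, hc2, hc3⟩ := aux_interior_extr hf hay hyx (by exact ha) (by rw [hx]; simpa)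
    exact ⟨c, hc2, hc3⟩

/-- zero of deriv to the right of a zero of f, given decay at +∞ -/
lemma aux_right {f : ℝ → ℝ} (hf : Differentiable ℝ f)
    (htop : Tendsto f atTop (nhds 0)) {x : ℝ} (hx : f x = 0) :
    ∃ c, x < c ∧ deriv f c = 0 := by
  by_cases hzero : ∀ y, x < y → f y = 0
  · refine ⟨x + 1, by linarith, ?_⟩
    have hev : f =ᶠ[nhds (x+1)] (fun _ => (0:ℝ)) := by
      filter_upwards [Ioo_mem_nhds (show x < x + 1 by linarith) (show x + 1 < x + 2 by linarith)]
        with y hy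
      exact hzero y hy.1
    rw [hev.deriv_eq]; simp
  · push_neg at hzero
    obtain ⟨y, hyx, hy⟩ := hzero
    have habs : 0 < |f y| := abs_pos.2 hy
    have habs' : Tendsto (fun z => |f z|) atTop (nhds 0) := by
      simpa using htop.abs
    have hev : ∀ᶠ z in atTop, |f z| < |f y| := habs'.eventually_lt_const habs
    obtain ⟨b, hb, hby⟩ := (hev.and (eventually_gt_atTop y)).exists
    obtain ⟨c, hc1, hc2, hc3⟩ := aux_interior_extr hf hyx hby (by rw [hx]; simpa) (by exact hb)
    exact ⟨c, hc1, hc3⟩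

/-- some zero of deriv, given decay at ±∞ -/
lemma aux_both {f : ℝ → ℝ} (hf : Differentiable ℝ f)
    (hbot : Tendsto f atBot (nhds 0)) (htop : Tendsto f atTop (nhds 0)) :
    ∃ c, deriv f c = 0 := by
  by_cases hzero : ∀ y, f y = 0
  · refine ⟨0, ?_⟩
    have : f = fun _ => (0:ℝ) := funext hzero
    rw [this]; simp
  · push_neg at hzero
    obtain ⟨y, hy⟩ := hzero
    have habs : 0 < |f y| := abs_pos.2 hy
    have hb' : Tendsto (fun z => |f z|) atBot (nhds 0) := by simpa using hbot.abs
    have ht' : Tendsto (fun z => |f z|) atTop (nhds 0) := by simpa using htop.abs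
    obtain ⟨a, ha, hay⟩ := ((hb'.eventually_lt_const habs).and (eventually_lt_atBot y)).exists
    obtain ⟨b, hb, hby⟩ := ((ht'.eventually_lt_const habs).and (eventually_gt_atTop y)).exists
    obtain ⟨c, _, _, hc3⟩ := aux_interior_extr hf hay hby (by exact ha) (by exact hb)
    exact ⟨c, hc3⟩

lemma aux_count_left (n : ℕ) (f : ℝ → ℝ) (hf : Differentiable ℝ f)
    (hbot : Tendsto f atBot (nhds 0)) (S : Finset ℝ)
    (hz : ∀ x ∈ S, f x = 0) (hS : S.Nonempty) (hcard : S.card = n) :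
    ∃ T : Finset ℝ, (∀ x ∈ T, deriv f x = 0) ∧ T.card = n ∧ ∀ t ∈ T, t < S.max' hS := by
  induction n generalizing S with
  | zero =>
    exact absurd hcard (by simpa using Finset.card_ne_zero_of_mem hS.choose_spec)
  | succ n ih =>
    set m := S.max' hS with hm
    have hmS : m ∈ S := S.max'_mem hS
    have hfm : f m = 0 := hz m hmS
    have hcard0 : (S.erase m).card = n := by
      rw [Finset.card_erase_of_mem hmS, hcard]; rfl
    rcases (S.erase m).eq_empty_or_nonempty with h0 | hS0
    · have hn : n = 0 := by rw [← hcard0, h0]; rfl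
      obtain ⟨c, hc1, hc2⟩ := aux_left hf hbot hfm
      exact ⟨{c}, by simpa using hc2, by simp [hn], by simpa using hc1⟩
    · obtain ⟨T₀, hT₀z, hT₀c, hT₀lt⟩ := ih (S.erase m)
        (fun x hx => hz x (Finset.mem_of_mem_erase hx)) hS0 hcard0
      set m₀ := (S.erase m).max' hS0 with hm₀
      have hm₀m : m₀ < m := by
        have h1 : m₀ ∈ S.erase m := Finset.max'_mem _ _
        have h2 : m₀ ≤ m := S.le_max' _ (Finset.mem_of_mem_erase h1)
        exact lt_of_le_of_ne h2 (Finset.ne_of_mem_erase h1)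
      obtain ⟨c, hcmem, hcz⟩ := exists_deriv_eq_zero hm₀m hf.continuous.continuousOn
        (by rw [hz m₀ (Finset.mem_of_mem_erase (Finset.max'_mem _ _)), hfm])
      have hcT₀ : c ∉ T₀ := fun h => absurd (hT₀lt c h) (not_lt.2 hcmem.1.le)
      refine ⟨insert c T₀, ?_, ?_, ?_⟩
      · intro x hx
        rcases Finset.mem_insert.1 hx with rfl | hx
        · exact hcz
        · exact hT₀z x hx
      · rw [Finset.card_insert_of_notMem hcT₀, hT₀c]
      · intro t ht
        rcases Finset.mem_insert.1 ht with rfl | ht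
        · exact hcmem.2
        · exact (hT₀lt t ht).trans hm₀m

lemma aux_count (f : ℝ → ℝ) (hf : Differentiable ℝ f)
    (hbot : Tendsto f atBot (nhds 0)) (htop : Tendsto f atTop (nhds 0))
    (S : Finset ℝ) (hz : ∀ x ∈ S, f x = 0) :
    ∃ T : Finset ℝ, (∀ x ∈ T, deriv f x = 0) ∧ T.card = S.card + 1 := by
  rcases S.eq_empty_or_nonempty with rfl | hS
  · obtain ⟨c, hc⟩ := aux_both hf hbot htop
    exact ⟨{c}, by simpa using hc, by simp⟩
  · obtain ⟨T₀, hT₀z, hT₀c, hT₀lt⟩ := aux_count_left S.card f hf hbot S hz hS rfl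
    obtain ⟨c, hc1, hc2⟩ := aux_right hf htop (hz _ (S.max'_mem hS))
    have hcT₀ : c ∉ T₀ := fun h => absurd (hT₀lt c h) (not_lt.2 hc1.le)
    refine ⟨insert c T₀, ?_, by rw [Finset.card_insert_of_notMem hcT₀, hT₀c]⟩
    intro x hx
    rcases Finset.mem_insert.1 hx with rfl | hx
    · exact hc2
    · exact hT₀z x hx

lemma aux_sq_atTop : Tendsto (fun s : ℝ => 1 + s^2) atTop atTop := by
  apply tendsto_atTop_add_const_left
  exact tendsto_pow_atTop two_ne_zero

lemma aux_sq_atBot : Tendsto (fun s : ℝ => 1 + s^2) atBot atTop := by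
  apply tendsto_atTop_add_const_left
  have h1 : Tendsto (fun s : ℝ => |s|) atBot atTop := tendsto_abs_atBot_atTop
  have h2 : Tendsto (fun x : ℝ => x^2) atTop atTop := tendsto_pow_atTop two_ne_zero
  exact (h2.comp h1).congr (fun s => by simp [sq_abs])

lemma aux_pt (c : ℝ) (i : ℕ) (s : ℝ) :
    (1+s^2)^c * |s|^i ≤ (1+s^2)^(c + i/2) := by
  have h1 : (0:ℝ) < 1 + s^2 := by positivity
  have h2 : |s|^i ≤ (1+s^2)^((i:ℝ)/2) := by
    have habs : |s| ≤ (1+s^2)^((1:ℝ)/2) := by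
      rw [show |s| = (s^2)^((1:ℝ)/2) by rw [← Real.sqrt_eq_rpow]; exact (Real.sqrt_sq_eq_abs s).symm]
      exact Real.rpow_le_rpow (by positivity) (by linarith [sq_nonneg s]) (by norm_num)
    calc |s|^i ≤ ((1+s^2)^((1:ℝ)/2))^i := pow_le_pow_left₀ (abs_nonneg s) habs i
      _ = (1+s^2)^((i:ℝ)/2) := by
          rw [← Real.rpow_natCast ((1+s^2)^((1:ℝ)/2)) i, ← Real.rpow_mul h1.le]
          ring_nf
  calc (1+s^2)^c * |s|^i ≤ (1+s^2)^c * (1+s^2)^((i:ℝ)/2) :=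
        mul_le_mul_of_nonneg_left h2 (Real.rpow_nonneg h1.le c)
    _ = (1+s^2)^(c + (i:ℝ)/2) := (Real.rpow_add h1 _ _).symm

lemma aux_decay_one (c : ℝ) (i : ℕ) (hci : c + (i:ℝ)/2 < 0) {L : Filter ℝ}
    (hmap : Tendsto (fun s : ℝ => 1 + s^2) L atTop) :
    Tendsto (fun s : ℝ => (1+s^2)^(c + (i:ℝ)/2)) L (nhds 0) := by
  have := (tendsto_rpow_neg_atTop (show 0 < -(c + (i:ℝ)/2) by linarith)).comp hmap
  simpa [Function.comp_def] using this

lemma aux_decay (c β : ℝ) (q : Polynomial ℝ) (h : 2*c + (q.natDegree : ℝ) < 0)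
    {L : Filter ℝ} (hmap : Tendsto (fun s : ℝ => 1 + s^2) L atTop) :
    Tendsto (fun s : ℝ => (1+s^2)^c * Real.exp (β * Real.arctan s) * q.eval s) L (nhds 0) := by
  set d := q.natDegree with hd
  have hB : Tendsto (fun s : ℝ => Real.exp (|β| * (π/2)) *
      ∑ i ∈ Finset.range (d+1), |q.coeff i| * (1+s^2)^(c + (i:ℝ)/2)) L (nhds 0) := by
    have hsum : Tendsto (fun s : ℝ => ∑ i ∈ Finset.range (d+1),
        |q.coeff i| * (1+s^2)^(c + (i:ℝ)/2)) L (nhds 0) := by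
      have := tendsto_finset_sum (Finset.range (d+1))
        (f := fun i (s : ℝ) => |q.coeff i| * (1+s^2)^(c + (i:ℝ)/2))
        (fun i hi => by
          have hi' : (i:ℝ) ≤ d := by
            exact_mod_cast Nat.lt_succ_iff.1 (Finset.mem_range.1 hi)
          exact tendsto_const_nhds.mul (aux_decay_one c i (by linarith) hmap))
      simpa using this
    simpa using tendsto_const_nhds.mul hsum
  apply squeeze_zero_norm _ hB
  intro s
  have h1 : (0:ℝ) < 1 + s^2 := by positivity
  have hE : Real.exp (β * Real.arctan s) ≤ Real.exp (|β| * (π/2)) := by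
    apply Real.exp_le_exp.2
    calc β * Real.arctan s ≤ |β * Real.arctan s| := le_abs_self _
      _ = |β| * |Real.arctan s| := abs_mul _ _
      _ ≤ |β| * (π/2) := by
          apply mul_le_mul_of_nonneg_left _ (abs_nonneg β)
          rw [abs_le]
          exact ⟨(Real.neg_pi_div_two_lt_arctan s).le, (Real.arctan_lt_pi_div_two s).le⟩
  have hEpos : 0 < Real.exp (β * Real.arctan s) := Real.exp_pos _
  have hApos : 0 ≤ (1+s^2)^c := Real.rpow_nonneg h1.le c
  rw [Real.norm_eq_abs, abs_mul, abs_mul, abs_of_nonneg hApos, abs_of_pos hEpos]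
  have hq : |q.eval s| ≤ ∑ i ∈ Finset.range (d+1), |q.coeff i| * |s|^i := by
    rw [Polynomial.eval_eq_sum_range]
    refine (Finset.abs_sum_le_sum_abs _ _).trans ?_
    apply Finset.sum_le_sum
    intro i _
    rw [abs_mul, abs_pow]
  calc (1+s^2)^c * Real.exp (β * Real.arctan s) * |q.eval s|
      ≤ (1+s^2)^c * Real.exp (|β| * (π/2)) *
        (∑ i ∈ Finset.range (d+1), |q.coeff i| * |s|^i) := by
        apply mul_le_mul
        · exact mul_le_mul_of_nonneg_left hE hApos
        · exact hq
        · exact abs_nonneg _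
        · positivity
    _ = Real.exp (|β| * (π/2)) *
        ∑ i ∈ Finset.range (d+1), |q.coeff i| * ((1+s^2)^c * |s|^i) := by
        rw [Finset.mul_sum, Finset.mul_sum]
        exact Finset.sum_congr rfl (fun i _ => by ring)
    _ ≤ Real.exp (|β| * (π/2)) *
        ∑ i ∈ Finset.range (d+1), |q.coeff i| * (1+s^2)^(c + (i:ℝ)/2) := by
        apply mul_le_mul_of_nonneg_left _ (Real.exp_pos _).le
        apply Finset.sum_le_sum
        intro i _
        exact mul_le_mul_of_nonneg_left (aux_pt c i s) (abs_nonneg _)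

lemma aux_one_add_sq_deriv (s : ℝ) : HasDerivAt (fun s : ℝ => 1 + s^2) (2*s) s := by
  have := (hasDerivAt_const s (1:ℝ)).add ((hasDerivAt_id s).pow 2)
  simpa using (hasDerivAt_pow 2 s)

lemma aux_rho_deriv (α β s : ℝ) :
    HasDerivAt (fun s : ℝ => (1 + s^2)^(α/2-1) * Real.exp (β * Real.arctan s))
      (((α-2)*s+β) * ((1+s^2)^(α/2-2) * Real.exp (β * Real.arctan s))) s := by
  have h0 : (0:ℝ) < 1 + s^2 := by positivity
  have h1 : HasDerivAt (fun s : ℝ => (1+s^2)^(α/2-1))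
      ((2*s) * (α/2-1) * (1+s^2)^(α/2-1-1)) s :=
    (aux_one_add_sq_deriv s).rpow_const (Or.inl h0.ne')
  have h2 : HasDerivAt (fun s : ℝ => Real.exp (β * Real.arctan s))
      (Real.exp (β * Real.arctan s) * (β * (1/(1+s^2)))) s :=
    ((Real.hasDerivAt_arctan s).const_mul β).exp
  have h3 := h1.mul h2
  refine h3.congr_deriv ?_
  have hsplit : (1+s^2)^(α/2-1) = (1+s^2)^(α/2-2) * (1+s^2) := by
    rw [← Real.rpow_add_one h0.ne']; ring_nf
  have hsplit2 : (1+s^2)^(α/2-1-1) = (1+s^2)^(α/2-2) := by ring_nf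
  rw [hsplit, hsplit2]
  field_simp

lemma aux_struct (α β : ℝ) (ρ : ℝ → ℝ)
    (hρ : ∀ s : ℝ, ρ s = (1 + s ^ 2) ^ (α / 2 - 1) * Real.exp (β * Real.arctan s))
    (l : ℕ) :
    ∀ k, k ≤ l → ∃ q : Polynomial ℝ, q.natDegree ≤ k ∧
      ∀ s : ℝ, iteratedDeriv k (fun t => (t ^ 2 + 1) ^ l * ρ t) s
        = (s^2+1)^(l-k) * ρ s * q.eval s := by
  have hρf : ρ = fun s : ℝ => (1 + s ^ 2) ^ (α / 2 - 1) * Real.exp (β * Real.arctan s) :=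
    funext hρ
  subst hρf
  intro k
  induction k with
  | zero =>
    intro _
    exact ⟨1, by simp, fun s => by simp [iteratedDeriv_zero]⟩
  | succ k ih =>
    intro hk1
    obtain ⟨q, hqd, hqe⟩ := ih (Nat.le_of_succ_le hk1)
    set m := l - k with hm
    have hm1 : 1 ≤ m := by omega
    have hmk : l - (k+1) = m - 1 := by omega
    refine ⟨(C (2*(m:ℝ) + α - 2) * X + C β) * q + (X^2 + 1) * derivative q, ?_, ?_⟩
    · -- degree bound
      apply (natDegree_add_le _ _).trans
      apply max_le
      · exact (natDegree_mul_le).trans (by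
          have := natDegree_linear_le (a := (2*(m:ℝ) + α - 2)) (b := β)
          omega)
      · by_cases hq0 : derivative q = 0
        · simp [hq0]
        · apply (natDegree_mul_le).trans
          have h1 : (X^2 + 1 : Polynomial ℝ).natDegree ≤ 2 := by
            apply (natDegree_add_le _ _).trans
            simp [natDegree_X_pow]
          have h2 : (derivative q).natDegree ≤ k - 1 := by
            have := natDegree_derivative_le q
            omega
          have h3 : 1 ≤ q.natDegree := by
            by_contra h
            push_neg at h
            interval_cases hq : q.natDegree
            · exact hq0 (by
                rw [Polynomial.eq_C_of_natDegree_eq_zero hq]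
                simp)
          omega
    · intro s
      have h0 : (0:ℝ) < 1 + s^2 := by positivity
      rw [iteratedDeriv_succ, funext hqe]
      have hpow : HasDerivAt (fun s : ℝ => (s^2+1)^m)
          ((m:ℝ) * (s^2+1)^(m-1) * (2*s)) s := by
        have hb : HasDerivAt (fun s : ℝ => s^2+1) (2*s) s := by
          have := ((hasDerivAt_id s).pow 2).add_const 1
          simpa using this
        exact hb.pow m
      have hρd := aux_rho_deriv α β s
      have hq := q.hasDerivAt s
      have htot := (hpow.mul hρd).mul hq
      rw [show (fun x => (x ^ 2 + 1) ^ m * (fun s => (1 + s ^ 2) ^ (α / 2 - 1) * Real.exp (β * arctan s)) x * eval x q) = ((fun s => (s ^ 2 + 1) ^ m) * fun s => (1 + s ^ 2) ^ (α / 2 - 1) * Real.exp (β * arctan s)) * fun x => eval x q from rfl, htot.deriv]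
      have hsplit : (1+s^2)^(α/2-1) = (1+s^2)^(α/2-2) * (1+s^2) := by
        rw [← Real.rpow_add_one h0.ne']; ring_nf
      have hpowsplit : (s^2+1)^m = (s^2+1)^(m-1) * (s^2+1) := by
        conv_lhs => rw [show m = (m-1)+1 by omega]
        rw [pow_succ]
      beta_reduce
      simp only [Pi.mul_apply]
      rw [hmk, hsplit, hpowsplit]
      simp only [eval_add, eval_mul, eval_pow, eval_X, eval_C, eval_one]
      ring

/-- For `α < 0`, `β ∈ ℝ`, the weight
`ρ(s) = (1+s²)^{α/2-1} e^{β arctan s}` on ℝ (case `σ(s) = s²+1`) and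
`Ψ_l(s) = (1/ρ(s)) (d/ds)^l [(s²+1)^l ρ(s)]`, for every `l < (1-α)/2`, the
real polynomial `p` of degree `l` with `Ψ_l = p` on ℝ has exactly `l`
distinct real roots, each of multiplicity one: the zeros of `Ψ_l` are
simple and lie in `(-∞,∞)`. -/
theorem zeros_simple_sigma_s_sq_plus_one
    (α β : ℝ) (hα : α < 0)
    (ρ : ℝ → ℝ)
    (hρ : ∀ s : ℝ, ρ s = (1 + s ^ 2) ^ (α / 2 - 1) * Real.exp (β * Real.arctan s))
    (l : ℕ) (hl : (l : ℝ) < (1 - α) / 2)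
    (Ψ : ℝ → ℝ)
    (hΨ : ∀ s : ℝ,
      Ψ s = (1 / ρ s) * iteratedDeriv l (fun t => (t ^ 2 + 1) ^ l * ρ t) s)
    (p : Polynomial ℝ) (hdeg : p.degree = l) (hp : ∀ s : ℝ, Ψ s = p.eval s) :
    p.roots.toFinset.card = l ∧
      ∀ x ∈ p.roots.toFinset, p.rootMultiplicity x = 1 := by
  set F : ℝ → ℝ := fun t => (t ^ 2 + 1) ^ l * ρ t with hF
  have hρpos : ∀ s, 0 < ρ s := fun s => by
    rw [hρ s]; positivity
  -- smoothness
  have hρc : ContDiff ℝ (⊤ : ℕ∞) ρ := by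
    rw [funext hρ]
    exact ((contDiff_const.add (contDiff_id.pow 2)).rpow_const_of_ne
        (fun x => by positivity)).mul
      (Real.contDiff_exp.comp (contDiff_const.mul Real.contDiff_arctan))
  have hFc : ContDiff ℝ (⊤ : ℕ∞) F :=
    (((contDiff_id.pow 2).add contDiff_const).pow l).mul hρc
  have hdiff : ∀ k : ℕ, Differentiable ℝ (iteratedDeriv k F) := by
    intro k
    exact hFc.differentiable_iteratedDeriv k (by
      exact_mod_cast lt_of_lt_of_le (WithTop.coe_lt_top _) le_rfl)
  -- decay for k < l
  have hdecay : ∀ k : ℕ, k < l →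
      Tendsto (iteratedDeriv k F) atBot (nhds 0) ∧
      Tendsto (iteratedDeriv k F) atTop (nhds 0) := by
    intro k hk
    obtain ⟨q, hqd, hqe⟩ := aux_struct α β ρ hρ l k hk.le
    have hc : 2*(((l-k : ℕ) : ℝ) + α/2 - 1) + (q.natDegree : ℝ) < 0 := by
      have h1 : ((l-k : ℕ) : ℝ) = (l : ℝ) - k := by
        rw [Nat.cast_sub hk.le]
      have h2 : (q.natDegree : ℝ) ≤ k := by exact_mod_cast hqd
      have h3 : (k : ℝ) ≥ 0 := Nat.cast_nonneg k
      rw [h1]; linarith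
    have key : ∀ (L : Filter ℝ), Tendsto (fun s : ℝ => 1 + s^2) L atTop →
        Tendsto (iteratedDeriv k F) L (nhds 0) := by
      intro L hL
      have := aux_decay (((l-k : ℕ) : ℝ) + α/2 - 1) β q hc hL
      apply this.congr
      intro s
      have h0 : (0:ℝ) < 1 + s^2 := by positivity
      rw [hqe s, hρ s]
      have : ((s^2+1 : ℝ))^(l-k) * (1+s^2)^(α/2-1)
          = (1+s^2)^(((l-k : ℕ) : ℝ) + α/2 - 1) := by
        rw [show (s^2+1 : ℝ) = 1+s^2 by ring, ← Real.rpow_natCast (1+s^2) (l-k),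
          ← Real.rpow_add h0]
        ring_nf
      rw [← this]
      ring
    exact ⟨key atBot aux_sq_atBot, key atTop aux_sq_atTop⟩
  -- zeros count induction
  have hzeros : ∀ k : ℕ, k ≤ l → ∃ S : Finset ℝ, S.card = k ∧
      ∀ x ∈ S, iteratedDeriv k F x = 0 := by
    intro k
    induction k with
    | zero => exact fun _ => ⟨∅, by simp, by simp⟩
    | succ k ih =>
      intro hk1
      obtain ⟨S, hScard, hSz⟩ := ih (Nat.le_of_succ_le hk1)
      obtain ⟨hbot, htop⟩ := hdecay k hk1
      obtain ⟨T, hTz, hTcard⟩ := aux_count (iteratedDeriv k F) (hdiff k) hbot htop S hSz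
      refine ⟨T, by rw [hTcard, hScard], ?_⟩
      intro x hx
      rw [iteratedDeriv_succ]
      exact hTz x hx
  obtain ⟨S, hScard, hSz⟩ := hzeros l le_rfl
  -- zeros of p
  have hproots : ∀ x ∈ S, p.eval x = 0 := by
    intro x hx
    have h1 : Ψ x = (1 / ρ x) * iteratedDeriv l F x := hΨ x
    have h2 := hSz x hx
    rw [h2, mul_zero] at h1
    rw [← hp x, h1]
  have hpne : p ≠ 0 := fun h => by simp [h] at hdeg
  have hnatdeg : p.natDegree = l := Polynomial.natDegree_eq_of_degree_eq_some hdeg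
  have hsub : S ⊆ p.roots.toFinset := by
    intro x hx
    rw [Multiset.mem_toFinset, Polynomial.mem_roots hpne]
    exact hproots x hx
  have hcard_le : l ≤ p.roots.toFinset.card := hScard ▸ Finset.card_le_card hsub
  have hroots_le : p.roots.card ≤ l := hnatdeg ▸ p.card_roots'
  have hcard_ge : p.roots.toFinset.card ≤ p.roots.card := p.roots.toFinset_card_le
  have hcard : p.roots.toFinset.card = l := le_antisymm (hcard_ge.trans hroots_le) hcard_le
  refine ⟨hcard, ?_⟩
  intro x hx
  rw [← Polynomial.count_roots]
  by_contra hne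
  have hge1 : 1 ≤ p.roots.count x := by
    rw [Multiset.one_le_count_iff_mem]
    exact Multiset.mem_toFinset.1 hx
  have hge2 : 2 ≤ p.roots.count x := by omega
  have hsum : ∑ y ∈ p.roots.toFinset, p.roots.count y = p.roots.card :=
    Multiset.toFinset_sum_count_eq _
  have hlt : p.roots.toFinset.card < ∑ y ∈ p.roots.toFinset, p.roots.count y := by
    calc p.roots.toFinset.card = ∑ _y ∈ p.roots.toFinset, 1 := by simp
      _ < _ := by
        apply Finset.sum_lt_sum
        · intro i hi
          rw [Multiset.one_le_count_iff_mem]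
          exact Multiset.mem_toFinset.1 hi
        · exact ⟨x, hx, by omega⟩
  omega
end

section
/- Let α, β be real with α < β < −α, let ρ(s) = (1+s)^{−(α−β)/2−1}(1−s)^{−(α+β)/2−1} for s ∈ (−1,1), for l ∈ ℕ define Ψ_l(s) = (1/ρ(s)) · (d/ds)^l [(1−s²)^l ρ(s)], and for m ≤ l define the associated special functions Ψ_{l,m}(s) = (1−s²)^{m/2} · (d/ds)^m Ψ_l(s). Then for every m ∈ ℕ and all natural numbers l ≠ l' with m ≤ l and m ≤ l', the function s ↦ Ψ_{l,m}(s) Ψ_{l',m}(s) ρ(s) is integrable on (−1,1) and ∫_{−1}^{1} Ψ_{l,m}(s) Ψ_{l',m}(s) ρ(s) ds = 0. -/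
/-!
Write `w_{a,b}(s) = (1+s)^a (1-s)^b`, so `ρ = w_{A,B}` with `A, B > -1`. For a polynomial `q`,
`(w_{a+1,b+1} q)' = w_{a,b} T_{a,b} q` with `T_{a,b} q` a polynomial of degree `≤ deg q + 1`.
Iterating, `(1-s²)^n ρ = w_{A+n,B+n}` has `n`-th derivative `ρ P_n` with `deg P_n ≤ n`, so
`Ψ_n = P_n` is a polynomial and `Ψ_{l,m} Ψ_{l',m} ρ = w_{A+m,B+m} P_l^{(m)} P_{l'}^{(m)}`.
Since the boundary terms `w_{a+1,b+1} q` vanish at `±1`, integrating by parts `k` times gives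
`∫ w_{a,b} (T^k q) p = (-1)^k ∫ w_{a+k,b+k} q p^{(k)}`. With `q = 1`, `k = n` this makes `P_n`
`ρ`-orthogonal to all polynomials of degree `< n`; with `k = m` it moves the `m` derivatives of
`P_{l'}^{(m)}` onto `P_l^{(m)}`, producing a polynomial of degree `≤ l < l'`.
-/

open MeasureTheory Polynomial Set

lemma Polynomial.iteratedDeriv_eval {𝕜 : Type*} [NontriviallyNormedField 𝕜] (p : 𝕜[X])
    (k : ℕ) :
    iteratedDeriv k (fun x => p.eval x) = fun x => (derivative^[k] p).eval x := by
  induction k generalizing p with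
  | zero => simp
  | succ k ih =>
    have h : deriv (fun x => p.eval x) = fun x => (derivative p).eval x := by
      ext x; exact p.deriv
    rw [iteratedDeriv_succ', h, ih, Function.iterate_succ_apply]

namespace Jacobi

noncomputable section

def weight (a b s : ℝ) : ℝ := (1 + s) ^ a * (1 - s) ^ b

def weighted (a b : ℝ) (q : ℝ[X]) (s : ℝ) : ℝ := weight a b s * q.eval s

/-- `(w_{a+1,b+1} q)' = w_{a,b} · derivFactor a b q`. -/
def derivFactor (a b : ℝ) (q : ℝ[X]) : ℝ[X] :=
  (C (a + 1) * (1 - X) - C (b + 1) * (1 + X)) * q + (1 - X ^ 2) * derivative q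

def iteratedDerivFactor : ℕ → ℝ → ℝ → ℝ[X] → ℝ[X]
  | 0, _, _, q => q
  | k + 1, a, b, q => iteratedDerivFactor k a b (derivFactor (a + k) (b + k) q)

def rodrigues (a b : ℝ) (n : ℕ) : ℝ[X] := iteratedDerivFactor n a b 1

end

variable {a b : ℝ}

lemma weight_pos {s : ℝ} (hs : s ∈ Ioo (-1 : ℝ) 1) : 0 < weight a b s :=
  mul_pos (Real.rpow_pos_of_pos (by linarith [hs.1]) _)
    (Real.rpow_pos_of_pos (by linarith [hs.2]) _)

lemma weight_add {c s : ℝ} (hs : s ∈ Ioo (-1 : ℝ) 1) :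
    weight (a + c) (b + c) s = (1 - s ^ 2) ^ c * weight a b s := by
  have h1 : 0 < 1 + s := by linarith [hs.1]
  have h2 : 0 < 1 - s := by linarith [hs.2]
  rw [weight, weight, Real.rpow_add h1, Real.rpow_add h2,
    show 1 - s ^ 2 = (1 + s) * (1 - s) by ring, Real.mul_rpow h1.le h2.le]
  ring

lemma weighted_one_sub_sq_mul (q : ℝ[X]) {s : ℝ} (hs : s ∈ Ioo (-1 : ℝ) 1) :
    weighted a b ((1 - X ^ 2) * q) s = weighted (a + 1) (b + 1) q s := by
  simp only [weighted, weight_add hs, Real.rpow_one, eval_mul, eval_sub, eval_one, eval_pow,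
    eval_X]
  ring

lemma weighted_add_mul {c s : ℝ} (hs : s ∈ Ioo (-1 : ℝ) 1) (u v : ℝ[X]) :
    weighted (a + c) (b + c) (u * v) s =
      (1 - s ^ 2) ^ (c / 2) * u.eval s * ((1 - s ^ 2) ^ (c / 2) * v.eval s) * weight a b s := by
  have h : 0 < 1 - s ^ 2 := by nlinarith [hs.1, hs.2]
  have hc : (1 - s ^ 2) ^ (c / 2) * (1 - s ^ 2) ^ (c / 2) = (1 - s ^ 2) ^ c := by
    rw [← Real.rpow_add h, add_halves]
  rw [weighted, weight_add hs, ← hc, eval_mul]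
  ring

lemma continuous_weighted (ha : 0 ≤ a) (hb : 0 ≤ b) (q : ℝ[X]) :
    Continuous (weighted a b q) :=
  (((Real.continuous_rpow_const ha).comp (continuous_const.add continuous_id)).mul
    ((Real.continuous_rpow_const hb).comp (continuous_const.sub continuous_id))).mul
    q.continuous_aeval

lemma hasDerivAt_weighted (q : ℝ[X]) {s : ℝ} (hs : s ∈ Ioo (-1 : ℝ) 1) :
    HasDerivAt (weighted (a + 1) (b + 1) q) (weighted a b (derivFactor a b q) s) s := by
  have h1 : 0 < 1 + s := by linarith [hs.1]
  have h2 : 0 < 1 - s := by linarith [hs.2]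
  have hp : HasDerivAt (fun t : ℝ => (1 + t) ^ (a + 1)) ((a + 1) * (1 + s) ^ a) s := by
    simpa [Function.comp_def] using (Real.hasDerivAt_rpow_const (p := a + 1) (Or.inl h1.ne')).comp s
      ((hasDerivAt_id s).const_add 1)
  have hq : HasDerivAt (fun t : ℝ => (1 - t) ^ (b + 1)) (-((b + 1) * (1 - s) ^ b)) s := by
    simpa [Function.comp_def] using (Real.hasDerivAt_rpow_const (p := b + 1) (Or.inl h2.ne')).comp s
      ((hasDerivAt_id s).const_sub 1)
  have h : HasDerivAt (weighted (a + 1) (b + 1) q) _ s := (hp.mul hq).mul (q.hasDerivAt s)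
  convert h using 1
  simp only [weighted, weight, derivFactor, Pi.mul_apply, eval_add, eval_sub, eval_mul, eval_one,
    eval_C, eval_X, eval_pow, Real.rpow_add_one h1.ne', Real.rpow_add_one h2.ne']
  ring

lemma iteratedDeriv_weighted (k : ℕ) (q : ℝ[X]) {s : ℝ} (hs : s ∈ Ioo (-1 : ℝ) 1) :
    iteratedDeriv k (weighted (a + k) (b + k) q) s =
      weighted a b (iteratedDerivFactor k a b q) s := by
  induction k generalizing q with
  | zero => simp [iteratedDerivFactor]
  | succ k ih =>
    have hderiv : EqOn (deriv (weighted (a + (k + 1 : ℕ)) (b + (k + 1 : ℕ)) q))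
        (weighted (a + k) (b + k) (derivFactor (a + k) (b + k) q)) (Ioo (-1) 1) := by
      intro x hx
      rw [Nat.cast_succ, ← add_assoc, ← add_assoc]
      exact (hasDerivAt_weighted q hx).deriv
    rw [iteratedDeriv_succ', hderiv.iteratedDeriv_of_isOpen isOpen_Ioo k hs, ih _]
    rfl

lemma natDegree_derivFactor_le (q : ℝ[X]) :
    (derivFactor a b q).natDegree ≤ q.natDegree + 1 := by
  have hlin : (C (a + 1) * (1 - X) - C (b + 1) * (1 + X) : ℝ[X]).natDegree ≤ 1 := by
    compute_degree
  have hquad : (1 - X ^ 2 : ℝ[X]).natDegree ≤ 2 := by compute_degree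
  refine (natDegree_add_le _ _).trans (max_le (natDegree_mul_le.trans (by omega)) ?_)
  rcases eq_or_ne q.natDegree 0 with h0 | h0
  · simp [derivative_of_natDegree_zero h0]
  · have := natDegree_derivative_le q
    exact natDegree_mul_le.trans (by omega)

lemma natDegree_iteratedDerivFactor_le (k : ℕ) (q : ℝ[X]) :
    (iteratedDerivFactor k a b q).natDegree ≤ q.natDegree + k := by
  induction k generalizing q with
  | zero => rfl
  | succ k ih =>
    have := natDegree_derivFactor_le (a := a + k) (b := b + k) q
    exact (ih _).trans (by omega)

lemma natDegree_rodrigues_le (n : ℕ) : (rodrigues a b n).natDegree ≤ n := by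
  simpa [rodrigues] using natDegree_iteratedDerivFactor_le (a := a) (b := b) n 1

lemma one_div_mul_iteratedDeriv_eqOn_rodrigues {ρ : ℝ → ℝ}
    (hρ : EqOn ρ (weight a b) (Ioo (-1) 1)) (n : ℕ) :
    EqOn (fun s => 1 / ρ s * iteratedDeriv n (fun t => (1 - t ^ 2) ^ n * ρ t) s)
      (fun s => (rodrigues a b n).eval s) (Ioo (-1) 1) := by
  have hinner : EqOn (fun t => (1 - t ^ 2) ^ n * ρ t) (weighted (a + n) (b + n) 1) (Ioo (-1) 1) :=
    fun t ht => by simp [weighted, weight_add ht, hρ ht]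
  intro s hs
  beta_reduce
  rw [hinner.iteratedDeriv_of_isOpen isOpen_Ioo n hs, iteratedDeriv_weighted n 1 hs, weighted,
    hρ hs, one_div, inv_mul_cancel_left₀ (weight_pos hs).ne', rodrigues]

lemma intervalIntegrable_weighted (ha : -1 < a) (hb : -1 < b) (q : ℝ[X]) :
    IntervalIntegrable (weighted a b q) volume (-1) 1 := by
  have hq : Continuous fun s : ℝ => q.eval s := q.continuous_aeval
  refine IntervalIntegrable.trans (b := 0) ?_ ?_
  · have h1 : IntervalIntegrable (fun s : ℝ => (1 + s) ^ a) volume (-1) 0 := by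
      simpa [add_comm] using
        (intervalIntegral.intervalIntegrable_rpow' (a := 0) (b := 1) ha).comp_add_right 1
    have hcont : ContinuousOn (fun s : ℝ => (1 - s) ^ b * q.eval s) (uIcc (-1) 0) := by
      refine ContinuousOn.mul ?_ hq.continuousOn
      refine ((continuous_const.sub continuous_id).continuousOn).rpow_const fun x hx => ?_
      rw [uIcc_of_le (by norm_num)] at hx
      exact Or.inl (by linarith [hx.2] : (0 : ℝ) < 1 - x).ne'
    convert h1.mul_continuousOn hcont using 1
    ext s
    simp only [weighted, weight]
    ring
  · have h1 : IntervalIntegrable (fun s : ℝ => (1 - s) ^ b) volume 0 1 := by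
      simpa using
        ((intervalIntegral.intervalIntegrable_rpow' (a := 0) (b := 1) hb).comp_sub_left 1).symm
    have hcont : ContinuousOn (fun s : ℝ => (1 + s) ^ a * q.eval s) (uIcc 0 1) := by
      refine ContinuousOn.mul ?_ hq.continuousOn
      refine ((continuous_const.add continuous_id).continuousOn).rpow_const fun x hx => ?_
      rw [uIcc_of_le (by norm_num)] at hx
      exact Or.inl (by linarith [hx.1] : (0 : ℝ) < 1 + x).ne'
    convert h1.mul_continuousOn hcont using 1
    ext s
    simp only [weighted, weight]
    ring

lemma integrableOn_weighted (ha : -1 < a) (hb : -1 < b) (q : ℝ[X]) :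
    IntegrableOn (weighted a b q) (Ioo (-1) 1) :=
  (intervalIntegrable_weighted ha hb q).1.mono_set Ioo_subset_Ioc_self

lemma integral_weighted_derivFactor_eq_zero (ha : -1 < a) (hb : -1 < b) (q : ℝ[X]) :
    ∫ s in Ioo (-1) 1, weighted a b (derivFactor a b q) s = 0 := by
  have hftc := intervalIntegral.integral_eq_sub_of_hasDerivAt_of_le (by norm_num)
    (continuous_weighted (by linarith) (by linarith) q).continuousOn
    (fun x hx => hasDerivAt_weighted q hx) (intervalIntegrable_weighted ha hb _)
  rw [← integral_Ioc_eq_integral_Ioo, ← intervalIntegral.integral_of_le (by norm_num), hftc]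
  norm_num [weighted, weight, Real.zero_rpow (show a + 1 ≠ 0 by linarith),
    Real.zero_rpow (show b + 1 ≠ 0 by linarith)]

lemma derivFactor_mul (q p : ℝ[X]) :
    derivFactor a b (q * p) = derivFactor a b q * p + (1 - X ^ 2) * (q * derivative p) := by
  rw [derivFactor, derivFactor, derivative_mul]
  ring

lemma integral_weighted_derivFactor_mul (ha : -1 < a) (hb : -1 < b) (q p : ℝ[X]) :
    ∫ s in Ioo (-1) 1, weighted a b (derivFactor a b q * p) s =
      -∫ s in Ioo (-1) 1, weighted (a + 1) (b + 1) (q * derivative p) s := by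
  have hsplit : EqOn (weighted a b (derivFactor a b (q * p)))
      (fun s => weighted a b (derivFactor a b q * p) s +
        weighted (a + 1) (b + 1) (q * derivative p) s)
      (Ioo (-1) 1) := fun s hs => by
    beta_reduce
    rw [derivFactor_mul, ← weighted_one_sub_sq_mul _ hs]
    simp only [weighted, eval_add]
    ring
  have h := integral_weighted_derivFactor_eq_zero ha hb (q * p)
  rw [setIntegral_congr_fun measurableSet_Ioo hsplit, integral_add
    (integrableOn_weighted ha hb _) (integrableOn_weighted (by linarith) (by linarith) _)] at h
  linarith

lemma integral_weighted_iteratedDerivFactor_mul (ha : -1 < a) (hb : -1 < b) (k : ℕ)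
    (q p : ℝ[X]) :
    ∫ s in Ioo (-1) 1, weighted a b (iteratedDerivFactor k a b q * p) s =
      (-1) ^ k * ∫ s in Ioo (-1) 1, weighted (a + k) (b + k) (q * derivative^[k] p) s := by
  induction k generalizing q with
  | zero => simp [iteratedDerivFactor]
  | succ k ih =>
    have hak : -1 < a + k := by linarith [k.cast_nonneg (α := ℝ)]
    have hbk : -1 < b + k := by linarith [k.cast_nonneg (α := ℝ)]
    rw [iteratedDerivFactor, ih, integral_weighted_derivFactor_mul hak hbk,
      Function.iterate_succ_apply', Nat.cast_succ, ← add_assoc, ← add_assoc, pow_succ]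
    ring

lemma integral_weighted_rodrigues_mul_eq_zero (ha : -1 < a) (hb : -1 < b) {n : ℕ} {p : ℝ[X]}
    (hp : p.natDegree < n) : ∫ s in Ioo (-1) 1, weighted a b (rodrigues a b n * p) s = 0 := by
  rw [rodrigues, integral_weighted_iteratedDerivFactor_mul ha hb, iterate_derivative_eq_zero hp]
  simp [weighted]

lemma integral_weighted_iterate_derivative_rodrigues_mul_eq_zero (ha : -1 < a) (hb : -1 < b)
    (m : ℕ) {n n' : ℕ} (hn : n < n') :
    ∫ s in Ioo (-1) 1, weighted (a + m) (b + m)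
      (derivative^[m] (rodrigues a b n) * derivative^[m] (rodrigues a b n')) s = 0 := by
  rcases le_or_gt m n with hmn | hnm
  · set q := derivative^[m] (rodrigues a b n)
    have hdeg : (iteratedDerivFactor m a b q).natDegree < n' :=
      calc _ ≤ q.natDegree + m := natDegree_iteratedDerivFactor_le m q
        _ ≤ n - m + m := by
          have := natDegree_rodrigues_le (a := a) (b := b) n
          have : q.natDegree ≤ (rodrigues a b n).natDegree - m := natDegree_iterate_derivative _ m
          omega
        _ < n' := by omega
    have h := integral_weighted_iteratedDerivFactor_mul ha hb m q (rodrigues a b n')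
    rw [mul_comm (iteratedDerivFactor m a b q), integral_weighted_rodrigues_mul_eq_zero ha hb hdeg]
      at h
    exact (mul_eq_zero.mp h.symm).resolve_left (pow_ne_zero _ (by norm_num))
  · rw [iterate_derivative_eq_zero ((natDegree_rodrigues_le n).trans_lt hnm)]
    simp [weighted]

end Jacobi

theorem orthogonality_associated_functions_jacobi_general
    (α β : ℝ) (hαβ : α < β) (hβα : β < -α)
    (ρ : ℝ → ℝ)
    (hρ : ∀ s : ℝ, s ∈ Set.Ioo (-1 : ℝ) 1 →
      ρ s = (1 + s) ^ (-(α - β) / 2 - 1) * (1 - s) ^ (-(α + β) / 2 - 1))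
    (Ψ : ℕ → ℝ → ℝ)
    (hΨ : ∀ (l : ℕ) (s : ℝ), s ∈ Set.Ioo (-1 : ℝ) 1 →
      Ψ l s = (1 / ρ s) * iteratedDeriv l (fun t => (1 - t ^ 2) ^ l * ρ t) s)
    (Ψa : ℕ → ℕ → ℝ → ℝ)
    (hΨa : ∀ (l m : ℕ) (s : ℝ), s ∈ Set.Ioo (-1 : ℝ) 1 →
      Ψa l m s = (1 - s ^ 2) ^ ((m : ℝ) / 2) * iteratedDeriv m (Ψ l) s)
    (m l l' : ℕ) (hne : l ≠ l') :
    IntegrableOn (fun s => Ψa l m s * Ψa l' m s * ρ s) (Set.Ioo (-1 : ℝ) 1) ∧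
      ∫ s in Set.Ioo (-1 : ℝ) 1, Ψa l m s * Ψa l' m s * ρ s = 0 := by
  have hA : -1 < -(α - β) / 2 - 1 := by linarith
  have hB : -1 < -(α + β) / 2 - 1 := by linarith
  set A : ℝ := -(α - β) / 2 - 1
  set B : ℝ := -(α + β) / 2 - 1
  have hρw : EqOn ρ (Jacobi.weight A B) (Ioo (-1) 1) := hρ
  have hΨP (n : ℕ) : EqOn (Ψ n) (fun s => (Jacobi.rodrigues A B n).eval s) (Ioo (-1) 1) :=
    fun s hs => (hΨ n s hs).trans (Jacobi.one_div_mul_iteratedDeriv_eqOn_rodrigues hρw n hs)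
  have hintegrand : EqOn (fun s => Ψa l m s * Ψa l' m s * ρ s)
      (Jacobi.weighted (A + m) (B + m)
        (derivative^[m] (Jacobi.rodrigues A B l) * derivative^[m] (Jacobi.rodrigues A B l')))
      (Ioo (-1) 1) := fun s hs => by
    beta_reduce
    rw [Jacobi.weighted_add_mul hs, hΨa l m s hs, hΨa l' m s hs, hρw hs,
      (hΨP l).iteratedDeriv_of_isOpen isOpen_Ioo m hs,
      (hΨP l').iteratedDeriv_of_isOpen isOpen_Ioo m hs,
      Polynomial.iteratedDeriv_eval, Polynomial.iteratedDeriv_eval]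
  have hm : (0 : ℝ) ≤ m := m.cast_nonneg
  refine ⟨(Jacobi.integrableOn_weighted (by linarith) (by linarith) _).congr_fun
    hintegrand.symm measurableSet_Ioo, ?_⟩
  rw [setIntegral_congr_fun measurableSet_Ioo hintegrand]
  rcases hne.lt_or_gt with h | h
  · exact Jacobi.integral_weighted_iterate_derivative_rodrigues_mul_eq_zero hA hB m h
  · rw [mul_comm (derivative^[m] _)]
    exact Jacobi.integral_weighted_iterate_derivative_rodrigues_mul_eq_zero hA hB m h

/-- For `α < β < -α`, the weight
`ρ(s) = (1+s)^{-(α-β)/2-1}(1-s)^{-(α+β)/2-1}` on `(-1,1)` (case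
`σ(s) = 1-s²`), `Ψ_l(s) = (1/ρ(s)) (d/ds)^l [(1-s²)^l ρ(s)]` and the
associated special functions `Ψ_{l,m}(s) = (1-s²)^{m/2} (d/ds)^m Ψ_l(s)`,
for every `m` and all `l ≠ l'` with `m ≤ l`, `m ≤ l'` the function
`s ↦ Ψ_{l,m}(s) Ψ_{l',m}(s) ρ(s)` is integrable on `(-1,1)` with integral
zero. -/
theorem orthogonality_associated_functions_jacobi
    (α β : ℝ) (hαβ : α < β) (hβα : β < -α)
    (ρ : ℝ → ℝ)
    (hρ : ∀ s : ℝ, s ∈ Set.Ioo (-1 : ℝ) 1 →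
      ρ s = (1 + s) ^ (-(α - β) / 2 - 1) * (1 - s) ^ (-(α + β) / 2 - 1))
    (Ψ : ℕ → ℝ → ℝ)
    (hΨ : ∀ (l : ℕ) (s : ℝ), s ∈ Set.Ioo (-1 : ℝ) 1 →
      Ψ l s = (1 / ρ s) * iteratedDeriv l (fun t => (1 - t ^ 2) ^ l * ρ t) s)
    (Ψa : ℕ → ℕ → ℝ → ℝ)
    (hΨa : ∀ (l m : ℕ) (s : ℝ), s ∈ Set.Ioo (-1 : ℝ) 1 →
      Ψa l m s = (1 - s ^ 2) ^ ((m : ℝ) / 2) * iteratedDeriv m (Ψ l) s)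
    (m l l' : ℕ) (hne : l ≠ l') (hml : m ≤ l) (hml' : m ≤ l') :
    IntegrableOn (fun s => Ψa l m s * Ψa l' m s * ρ s) (Set.Ioo (-1 : ℝ) 1) ∧
      ∫ s in Set.Ioo (-1 : ℝ) 1, Ψa l m s * Ψa l' m s * ρ s = 0 :=
  orthogonality_associated_functions_jacobi_general α β hαβ hβα ρ hρ Ψ hΨ Ψa hΨa m l l' hne
end
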